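/- arXiv:2306.03027 — 6 statements merged into one kernel-verified Lean document; each statement's English description precedes it below -/
import Mathlib

section
/- Let d ≥ 1 and let ψ : ℝ^d → ℝ satisfy the decay bound (1 + ‖x‖₂)^K |ψ(x)| ≤ C₀ for all x ∈ ℝ^d, for some constants C₀ > 0 and K > d. Then there exists a constant B > 0, depending only on d, K and C₀, such that for every bounded function u : ℝ^d → ℝ, every h > 0, every D ≥ 1, every truncation radius Λ ≥ h√D, and every x ∈ ℝ^d, the truncated quasi-interpolant satisfies |u†(x) − û(x)| ≤ B (√D h / Λ)^{K − d} · sup_{y ∈ ℝ^d}|u(y)|. -/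
noncomputable section

open scoped BigOperators

/-- The lattice point `m h = (m₁ h, …, m_d h)` of the cardinal grid of step `h`. -/
def latt {d : ℕ} (h : ℝ) (m : Fin d → ℤ) : EuclideanSpace ℝ (Fin d) :=
  WithLp.toLp 2 (fun i => h * (m i))

/-- The quasi-interpolant `û(x) = D^{-d/2} Σ_{m ∈ ℤ^d} u(mh) ψ((x − mh)/(h√D))`. -/
def quasiInterp {d : ℕ} (u ψ : EuclideanSpace ℝ (Fin d) → ℝ) (h D : ℝ)
    (x : EuclideanSpace ℝ (Fin d)) : ℝ :=
  D ^ (-(d : ℝ) / 2) *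
    ∑' m : Fin d → ℤ, u (latt h m) * ψ ((h * Real.sqrt D)⁻¹ • (x - latt h m))

/-- The truncated quasi-interpolant
`u†(x) = D^{-d/2} Σ_{m ∈ ℤ^d, ‖x − mh‖ ≤ Λ} u(mh) ψ((x − mh)/(h√D))`. -/
def truncQuasiInterp {d : ℕ} (u ψ : EuclideanSpace ℝ (Fin d) → ℝ) (h D Λ : ℝ)
    (x : EuclideanSpace ℝ (Fin d)) : ℝ :=
  D ^ (-(d : ℝ) / 2) *
    ∑' m : Fin d → ℤ,
      if ‖x - latt h m‖ ≤ Λ then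
        u (latt h m) * ψ ((h * Real.sqrt D)⁻¹ • (x - latt h m))
      else 0




open Finset in
/-- Bernoulli-type inequality. -/
lemma aux_bernoulli {s r : ℝ} (hs : 0 < s) (hr0 : 0 ≤ r) (hr1 : r < 1) :
    1 + s * r ≤ (1 - r) ^ (-s) := by
  have h1r : (0:ℝ) < 1 - r := by linarith
  have : (1 - r) ^ (-s) = Real.exp (-s * Real.log (1 - r)) := by
    rw [Real.rpow_def_of_pos h1r]; ring_nf
  rw [this]
  have hlog : Real.log (1 - r) ≤ -r := by
    have := Real.log_le_sub_one_of_pos h1r; linarith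
  have h1 : 1 + s * r ≤ 1 + (-s * Real.log (1 - r)) := by nlinarith
  refine h1.trans ?_
  have := Real.add_one_le_exp (-s * Real.log (1 - r))
  linarith

lemma aux_telescope {s a b : ℝ} (hs : 0 < s) (ha : 1 ≤ a) (hb : 0 < b) (M : ℕ) :
    ∑ k ∈ Finset.range M, (a + k * b) ^ (-(s+1)) ≤ a ^ (-s) * (1 + 1/(s*b)) := by
  have ha0 : (0:ℝ) < a := lt_of_lt_of_le one_pos ha
  -- pointwise bound for k ≥ 1
  have key : ∀ k : ℕ, (a + (k+1) * b) ^ (-(s+1)) ≤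
      (1/(s*b)) * ((a + k*b) ^ (-s) - (a + (k+1)*b) ^ (-s)) := by
    intro k
    set x : ℝ := a + (k+1) * b with hx
    have hxb : x - b = a + k * b := by rw [hx]; ring
    have hxpos : (1:ℝ) ≤ x - b := by
      rw [hxb]; nlinarith [k.cast_nonneg (α := ℝ)]
    have hx1 : (1:ℝ) ≤ x := by nlinarith
    have hx0 : (0:ℝ) < x := lt_of_lt_of_le one_pos hx1
    have hr1 : b / x < 1 := by
      rw [div_lt_one hx0]; linarith
    have hr0 : 0 ≤ b / x := le_of_lt (div_pos hb hx0)
    have hbern := aux_bernoulli hs hr0 hr1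
    have h1br : 1 - b/x = (x - b)/x := by field_simp
    -- (x-b)^(-s) ≥ x^(-s) * (1 + s*b/x)
    have hxb0 : (0:ℝ) < x - b := lt_of_lt_of_le one_pos hxpos
    have hdiv : ((x - b)/x) ^ (-s) = (x-b)^(-s) / x^(-s) := by
      rw [Real.div_rpow (le_of_lt hxb0) (le_of_lt hx0)]
    have hxs : (0:ℝ) < x ^ (-s) := Real.rpow_pos_of_pos hx0 _
    rw [h1br, hdiv] at hbern
    -- hbern : 1 + s * (b/x) ≤ (x-b)^(-s) / x^(-s)
    have h2 : (1 + s * (b/x)) * x ^ (-s) ≤ (x-b)^(-s) := by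
      exact (le_div_iff₀ hxs).mp hbern
    -- expand: x^(-s) + s*b* x^(-s)/x ≤ (x-b)^(-s)
    have hxss : x ^ (-s) / x = x ^ (-(s+1)) := by
      rw [div_eq_mul_inv, ← Real.rpow_neg_one x, ← Real.rpow_add hx0]
      ring_nf
    have h3 : x ^ (-s) + s * b * x ^ (-(s+1)) ≤ (x-b)^(-s) := by
      have : (1 + s * (b/x)) * x ^ (-s) = x ^ (-s) + s * b * (x ^ (-s) / x) := by ring
      rw [this, hxss] at h2; linarith
    have hsb : 0 < s * b := mul_pos hs hb
    rw [hxb] at h3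
    rw [div_mul_eq_mul_div, le_div_iff₀ hsb]
    have hxsnn : 0 ≤ x ^ (-s) := le_of_lt (Real.rpow_pos_of_pos hx0 _)
    nlinarith [h3]
  have hFnn : ∀ k : ℕ, (0:ℝ) ≤ (a + k*b) ^ (-s) := fun k =>
    le_of_lt (Real.rpow_pos_of_pos (by nlinarith [k.cast_nonneg (α := ℝ)]) _)
  have hbound : 0 ≤ 1/(s*b) := by positivity
  cases M with
  | zero => simp; positivity
  | succ n =>
    rw [Finset.sum_range_succ']
    have h1 : ∑ k ∈ Finset.range n, (a + (↑(k+1)) * b) ^ (-(s+1)) ≤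
        (1/(s*b)) * ((a + (0:ℕ)*b) ^ (-s) - (a + (n:ℕ)*b) ^ (-s)) := by
      have := Finset.sum_range_sub' (f := fun k : ℕ => (1/(s*b)) * ((a + k*b) ^ (-s))) n
      calc ∑ k ∈ Finset.range n, (a + (↑(k+1)) * b) ^ (-(s+1))
          ≤ ∑ k ∈ Finset.range n, ((1/(s*b)) * ((a + k*b) ^ (-s)) -
              (1/(s*b)) * ((a + (↑(k+1))*b) ^ (-s))) := by
            apply Finset.sum_le_sum
            intro k _
            have := key k
            push_cast
            push_cast at this
            linarith
        _ = (1/(s*b)) * ((a + (0:ℕ)*b) ^ (-s)) - (1/(s*b)) * ((a + (n:ℕ)*b) ^ (-s)) := this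
        _ = (1/(s*b)) * ((a + (0:ℕ)*b) ^ (-s) - (a + (n:ℕ)*b) ^ (-s)) := by ring
    have h2 : (a + (0:ℕ)*b) ^ (-(s+1)) ≤ a ^ (-s) := by
      push_cast
      rw [zero_mul, add_zero]
      exact Real.rpow_le_rpow_of_exponent_le ha (by linarith)
    have h3 : (a + (0:ℕ)*b) ^ (-s) = a ^ (-s) := by norm_num
    have h4 : (1/(s*b)) * ((a + (0:ℕ)*b) ^ (-s) - (a + (n:ℕ)*b) ^ (-s)) ≤ (1/(s*b)) * a ^ (-s) := by
      rw [h3]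
      apply mul_le_mul_of_nonneg_left _ hbound
      linarith [hFnn n]
    push_cast at h1 h2 h4 ⊢
    have := Finset.sum_range_succ' (fun k : ℕ => (a + k*b) ^ (-(s+1))) n
    nlinarith [Real.rpow_pos_of_pos ha0 (-s)]

lemma aux_icc_card (u v : ℝ) (huv : v - u ≤ 1) :
    (Finset.Icc ⌈u⌉ ⌊v⌋).card ≤ 2 := by
  rw [Int.card_Icc]
  have h1 : u ≤ (⌈u⌉:ℝ) := Int.le_ceil u
  have h2 : (⌊v⌋:ℝ) ≤ v := Int.floor_le v
  have h3 : ((⌊v⌋ - ⌈u⌉ : ℤ):ℝ) ≤ 1 := by push_cast; linarith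
  have h4 : ⌊v⌋ - ⌈u⌉ ≤ 1 := by exact_mod_cast h3
  omega

lemma aux_card {d : ℕ} (c : Fin d → ℝ) (n : ℕ) (S : Finset (Fin d → ℤ))
    (hS : ∀ m ∈ S, ∃ i, ((n:ℝ) ≤ |c i - m i| ∧ ∀ j, |c j - (m j : ℝ)| < n+1)) :
    S.card ≤ 4 * d * (2*n+3)^(d-1) := by
  classical
  set Full : Fin d → Finset ℤ := fun j => Finset.Icc ⌈c j - (n+1)⌉ ⌊c j + (n+1)⌋ with hFull
  set Bad : Fin d → Finset ℤ := fun i => (Full i).filter (fun k => (n:ℝ) ≤ |c i - k|) with hBad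
  set J : Fin d → Finset (Fin d → ℤ) :=
    fun i => Fintype.piFinset (fun j => if j = i then Bad i else Full j) with hJ
  have hmemFull : ∀ j (k : ℤ), |c j - (k:ℝ)| < n+1 → k ∈ Full j := by
    intro j k hk
    rw [abs_lt] at hk
    rw [hFull, Finset.mem_Icc]
    constructor
    · rw [Int.ceil_le]; push_cast; linarith [hk.2]
    · rw [Int.le_floor]; push_cast; linarith [hk.1]
  have hsub : S ⊆ Finset.univ.biUnion J := by
    intro m hm
    obtain ⟨i, hi1, hi2⟩ := hS m hm
    rw [Finset.mem_biUnion]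
    refine ⟨i, Finset.mem_univ _, ?_⟩
    rw [hJ, Fintype.mem_piFinset]
    intro j
    by_cases hji : j = i
    · subst hji
      rw [if_pos rfl, hBad]
      exact Finset.mem_filter.mpr ⟨hmemFull j _ (hi2 j), hi1⟩
    · rw [if_neg hji]
      exact hmemFull j _ (hi2 j)
  have hcardFull : ∀ j, (Full j).card ≤ 2*n+3 := by
    intro j
    rw [hFull, Int.card_Icc]
    have h1 : (⌈c j - (n+1)⌉ : ℝ) ≥ c j - (n+1) := Int.le_ceil _
    have h2 : (⌊c j + (n+1)⌋ : ℝ) ≤ c j + (n+1) := Int.floor_le _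
    have h3 : ((⌊c j + (n+1)⌋ + 1 - ⌈c j - (n+1)⌉ : ℤ) : ℝ) ≤ 2*(n:ℝ)+3 := by
      push_cast; linarith
    have h4 : ⌊c j + (n+1)⌋ + 1 - ⌈c j - (n+1)⌉ ≤ 2*(n:ℤ)+3 := by exact_mod_cast h3
    omega
  have hcardBad : ∀ i, (Bad i).card ≤ 4 := by
    intro i
    have hsub2 : Bad i ⊆ Finset.Icc ⌈c i - (n+1)⌉ ⌊c i - n⌋ ∪ Finset.Icc ⌈c i + n⌉ ⌊c i + (n+1)⌋ := by
      intro k hk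
      rw [hBad, Finset.mem_filter, hFull, Finset.mem_Icc] at hk
      obtain ⟨⟨hk1, hk2⟩, hk3⟩ := hk
      rw [Finset.mem_union, Finset.mem_Icc, Finset.mem_Icc]
      rcases abs_cases (c i - (k:ℝ)) with ⟨heq, _⟩ | ⟨heq, _⟩
      · left
        refine ⟨hk1, ?_⟩
        rw [Int.le_floor]; rw [heq] at hk3; push_cast; linarith
      · right
        refine ⟨?_, hk2⟩
        rw [Int.ceil_le]; rw [heq] at hk3; push_cast; linarith
    calc (Bad i).card ≤ _ := Finset.card_le_card hsub2
      _ ≤ (Finset.Icc ⌈c i - (n+1)⌉ ⌊c i - n⌋).card + (Finset.Icc ⌈c i + n⌉ ⌊c i + (n+1)⌋).card :=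
          Finset.card_union_le _ _
      _ ≤ 2 + 2 := by
          gcongr
          · exact aux_icc_card _ _ (by push_cast; linarith)
          · exact aux_icc_card _ _ (by push_cast; linarith)
      _ = 4 := rfl
  have hcardJ : ∀ i, (J i).card ≤ 4 * (2*n+3)^(d-1) := by
    intro i
    rw [hJ, Fintype.card_piFinset]
    calc ∏ j, (if j = i then Bad i else Full j).card
        ≤ ∏ j : Fin d, (if j = i then 4 else 2*n+3) := by
          apply Finset.prod_le_prod'
          intro j _
          by_cases hji : j = i
          · subst hji; rw [if_pos rfl, if_pos rfl]; exact hcardBad j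
          · rw [if_neg hji, if_neg hji]; exact hcardFull j
      _ = 4 * (2*n+3)^(d-1) := by
          rw [Finset.prod_eq_mul_prod_sdiff_singleton_of_mem (Finset.mem_univ i)]
          rw [if_pos rfl]
          congr 1
          rw [Finset.prod_congr rfl (fun j hj => if_neg (fun h => by simp [h] at hj)),
            Finset.prod_const]
          congr 1
          rw [Finset.card_sdiff_of_subset (by simp), Finset.card_univ]
          simp
  calc S.card ≤ (Finset.univ.biUnion J).card := Finset.card_le_card hsub
    _ ≤ ∑ i, (J i).card := Finset.card_biUnion_le
    _ ≤ ∑ _i : Fin d, 4 * (2*n+3)^(d-1) := Finset.sum_le_sum (fun i _ => hcardJ i)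
    _ = 4 * d * (2*n+3)^(d-1) := by rw [Finset.sum_const]; simp; ring

set_option maxHeartbeats 1000000 in
/-- **Truncation error bound.** If `ψ` satisfies the decay bound `(1 + ‖x‖)^K |ψ x| ≤ C₀`
with `K > d`, then there is a constant `B > 0` (depending only on `d`, `K`, `C₀`) such that
for every bounded `u`, every `h > 0`, `D ≥ 1`, every truncation radius `Λ ≥ h√D`, and every
`x`, one has `|u†(x) − û(x)| ≤ B (√D h / Λ)^{K − d} · sup|u|`. -/
theorem truncation_error_bound {d : ℕ} (hd : 1 ≤ d)
    (ψ : EuclideanSpace ℝ (Fin d) → ℝ)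
    (C₀ K : ℝ) (hC₀ : 0 < C₀) (hK : (d : ℝ) < K)
    (hdecay : ∀ x, (1 + ‖x‖) ^ K * |ψ x| ≤ C₀) :
    ∃ B : ℝ, 0 < B ∧
      ∀ u : EuclideanSpace ℝ (Fin d) → ℝ, (∃ C : ℝ, ∀ y, |u y| ≤ C) →
        ∀ h : ℝ, 0 < h → ∀ D : ℝ, 1 ≤ D → ∀ Λ : ℝ, h * Real.sqrt D ≤ Λ →
          ∀ x : EuclideanSpace ℝ (Fin d),
            |truncQuasiInterp u ψ h D Λ x - quasiInterp u ψ h D x| ≤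
              B * (Real.sqrt D * h / Λ) ^ (K - (d : ℝ)) *
                (⨆ y : EuclideanSpace ℝ (Fin d), |u y|) := by
  classical
  have hd0 : 0 < d := hd
  haveI : Nonempty (Fin d) := ⟨⟨0, hd0⟩⟩
  set s : ℝ := K - d with hs_def
  have hs : 0 < s := by rw [hs_def]; linarith
  set sd : ℝ := Real.sqrt d with hsd_def
  have hsd1 : 1 ≤ sd := by
    rw [hsd_def]
    rw [show (1:ℝ) = Real.sqrt 1 by simp]
    exact Real.sqrt_le_sqrt (by exact_mod_cast hd)
  have hsd0 : 0 < sd := lt_of_lt_of_le one_pos hsd1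
  set C₁ : ℝ := (4 * d * 3^(d-1) : ℕ) * (1 + 1/s) with hC₁_def
  have hC₁ : 0 < C₁ := by
    rw [hC₁_def]
    have : (0:ℝ) < (4 * d * 3^(d-1) : ℕ) := by positivity
    positivity
  refine ⟨C₀ * C₁ * sd ^ s, by positivity, ?_⟩
  rintro u ⟨C, hC⟩ h hh D hD Λ hΛ x
  set SD : ℝ := Real.sqrt D with hSD_def
  have hSD1 : 1 ≤ SD := by
    rw [hSD_def, show (1:ℝ) = Real.sqrt 1 by simp]
    exact Real.sqrt_le_sqrt hD
  have hSD0 : 0 < SD := lt_of_lt_of_le one_pos hSD1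
  have hΛ0 : 0 < Λ := lt_of_lt_of_le (by positivity) hΛ
  have hbdd : BddAbove (Set.range fun y => |u y|) := ⟨C, by rintro _ ⟨y, rfl⟩; exact hC y⟩
  set M : ℝ := ⨆ y : EuclideanSpace ℝ (Fin d), |u y| with hM_def
  have hM : ∀ y, |u y| ≤ M := fun y => le_ciSup hbdd y
  have hM0 : 0 ≤ M := le_trans (abs_nonneg _) (hM 0)
  -- basic objects
  set w : (Fin d → ℤ) → EuclideanSpace ℝ (Fin d) := fun m => x - latt h m with hw_def
  set e : (Fin d → ℤ) → ℝ := fun m => (1 + ‖w m‖ / (h * SD)) ^ (-K) with he_def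
  set g : (Fin d → ℤ) → ℝ :=
    fun m => u (latt h m) * ψ ((h * SD)⁻¹ • (x - latt h m)) with hg_def
  set t : (Fin d → ℤ) → ℝ :=
    fun m => if ‖x - latt h m‖ ≤ Λ then g m else 0 with ht_def
  have hbase : ∀ m, 0 < 1 + ‖w m‖ / (h * SD) := by
    intro m
    have : 0 ≤ ‖w m‖ / (h * SD) := by positivity
    linarith
  have he_pos : ∀ m, 0 < e m := fun m => Real.rpow_pos_of_pos (hbase m) _
  -- pointwise bound |g m| ≤ C₀ * M * e m
  have hg_le : ∀ m, |g m| ≤ C₀ * M * e m := by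
    intro m
    have hz : ‖(h * SD)⁻¹ • (x - latt h m)‖ = ‖w m‖ / (h * SD) := by
      rw [norm_smul, norm_inv, Real.norm_eq_abs, abs_of_pos (by positivity : (0:ℝ) < h * SD)]
      rw [div_eq_inv_mul, hw_def]
    have hψ : |ψ ((h * SD)⁻¹ • (x - latt h m))| ≤ C₀ * e m := by
      have h1 := hdecay ((h * SD)⁻¹ • (x - latt h m))
      rw [hz] at h1
      have h2 : (0:ℝ) < (1 + ‖w m‖ / (h * SD)) ^ K := Real.rpow_pos_of_pos (hbase m) _
      have h3 : e m = ((1 + ‖w m‖ / (h * SD)) ^ K)⁻¹ := by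
        simp only [he_def]
        rw [Real.rpow_neg (le_of_lt (hbase m))]
      rw [h3, ← div_eq_mul_inv, le_div_iff₀ h2]
      linarith [h1, mul_comm ((1 + ‖w m‖ / (h * SD)) ^ K) (|ψ ((h * SD)⁻¹ • (x - latt h m))|)]
    calc |g m| = |u (latt h m)| * |ψ _| := by rw [hg_def, abs_mul]
      _ ≤ M * (C₀ * e m) := by
          apply mul_le_mul (hM _) hψ (abs_nonneg _) hM0
      _ = C₀ * M * e m := by ring
  -- shell machinery
  set c : Fin d → ℝ := fun i => x i / h with hc_def
  set Am : (Fin d → ℤ) → ℝ :=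
    fun m => Finset.univ.sup' Finset.univ_nonempty (fun i => |c i - m i|) with hAm_def
  set φ : (Fin d → ℤ) → ℕ := fun m => ⌊Am m⌋₊ with hφ_def
  have hAm_ge : ∀ m j, |c j - (m j : ℝ)| ≤ Am m := by
    intro m j
    simp only [hAm_def]
    exact Finset.le_sup' (fun i => |c i - (m i : ℝ)|) (Finset.mem_univ j)
  have hAm_nonneg : ∀ m, 0 ≤ Am m :=
    fun m => le_trans (abs_nonneg _) (hAm_ge m (Classical.arbitrary _))
  have hw_apply : ∀ m i, w m i = x i - h * m i := by
    intro m i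
    rw [hw_def]
    simp [latt]
  have hAm_w : ∀ m i, |w m i| = h * |c i - (m i : ℝ)| := by
    intro m i
    rw [hw_apply, hc_def]
    have hxi : x i - h * m i = h * (x i / h - m i) := by field_simp
    rw [hxi, abs_mul, abs_of_pos hh]
  have hcoord_le : ∀ (v : EuclideanSpace ℝ (Fin d)) i, |v i| ≤ ‖v‖ := by
    intro v i
    rw [EuclideanSpace.norm_eq, show |v i| = Real.sqrt ((v i)^2) from (Real.sqrt_sq_eq_abs _).symm]
    apply Real.sqrt_le_sqrt
    have := Finset.single_le_sum (f := fun j => ‖v j‖^2) (fun j _ => by positivity)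
      (Finset.mem_univ i)
    simpa [Real.norm_eq_abs, sq_abs] using this
  have hlow : ∀ m, h * Am m ≤ ‖w m‖ := by
    intro m
    obtain ⟨i, _, hieq⟩ := Finset.exists_mem_eq_sup' Finset.univ_nonempty
      (fun i => |c i - (m i : ℝ)|)
    calc h * Am m = h * |c i - (m i : ℝ)| := by simp only [hAm_def]; rw [hieq]
      _ = |w m i| := (hAm_w m i).symm
      _ ≤ ‖w m‖ := hcoord_le _ i
  have hup : ∀ m, ‖w m‖ ≤ sd * (h * Am m) := by
    intro m
    rw [EuclideanSpace.norm_eq]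
    have hsum : ∑ i, ‖w m i‖^2 ≤ (d : ℝ) * (h * Am m)^2 := by
      calc ∑ i, ‖w m i‖^2 ≤ ∑ _i : Fin d, (h * Am m)^2 := by
            apply Finset.sum_le_sum
            intro i _
            rw [Real.norm_eq_abs, hAm_w]
            apply pow_le_pow_left₀ (by positivity)
            exact mul_le_mul_of_nonneg_left (hAm_ge m i) (le_of_lt hh)
        _ = (d : ℝ) * (h * Am m)^2 := by rw [Finset.sum_const]; simp [mul_comm]
    calc Real.sqrt (∑ i, ‖w m i‖^2) ≤ Real.sqrt ((d:ℝ) * (h * Am m)^2) := Real.sqrt_le_sqrt hsum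
      _ = sd * (h * Am m) := by
          rw [Real.sqrt_mul (by positivity), Real.sqrt_sq (mul_nonneg hh.le (hAm_nonneg m)), hsd_def]
  have hKpos : (0:ℝ) < K := lt_trans (by exact_mod_cast hd0) hK
  have he_le : ∀ (m : Fin d → ℤ) (n : ℕ), n ≤ φ m → e m ≤ (1 + n/SD) ^ (-K) := by
    intro m n hn
    have h1 : (n : ℝ) ≤ Am m := by
      calc (n:ℝ) ≤ (φ m : ℝ) := by exact_mod_cast hn
        _ ≤ Am m := Nat.floor_le (hAm_nonneg m)
    have h2 : (n:ℝ)/SD ≤ ‖w m‖ / (h * SD) := by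
      rw [div_le_div_iff₀ hSD0 (by positivity)]
      calc (n:ℝ) * (h * SD) = (n * h) * SD := by ring
        _ ≤ (Am m * h) * SD := by
            apply mul_le_mul_of_nonneg_right (mul_le_mul_of_nonneg_right h1 (le_of_lt hh))
              (le_of_lt hSD0)
        _ ≤ ‖w m‖ * SD := by
            apply mul_le_mul_of_nonneg_right _ (le_of_lt hSD0)
            rw [mul_comm]; exact hlow m
    apply Real.rpow_le_rpow_of_nonpos (by positivity) (by linarith) (by linarith)
  -- main finite-sum bound
  have key : ∀ (N : ℕ) (A : Finset (Fin d → ℤ)), (∀ m ∈ A, N ≤ φ m) →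
      ∑ m ∈ A, e m ≤ C₁ * SD^d * (1 + (N:ℝ)/SD) ^ (-s) := by
    intro N A hA
    have hfib := Finset.sum_fiberwise_of_maps_to
      (g := φ) (t := A.image φ) (fun m hm => Finset.mem_image_of_mem φ hm) e
    rw [← hfib]
    set H : ℕ → ℝ := fun n => ((4*d*(2*n+3)^(d-1) : ℕ) : ℝ) * (1 + (n:ℝ)/SD) ^ (-K) with hH_def
    have hH0 : ∀ n, 0 ≤ H n := by
      intro n
      simp only [hH_def]
      have : (0:ℝ) < 1 + (n:ℝ)/SD := by positivity
      positivity
    have hfiber : ∀ n ∈ A.image φ,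
        ∑ m ∈ A.filter (fun m => φ m = n), e m ≤ H n := by
      intro n hn
      have hcard : (A.filter (fun m => φ m = n)).card ≤ 4*d*(2*n+3)^(d-1) := by
        apply aux_card c n
        intro m hm
        have hφm : φ m = n := (Finset.mem_filter.mp hm).2
        have h1 : (n:ℝ) ≤ Am m := by
          rw [← hφm]
          exact_mod_cast Nat.floor_le (hAm_nonneg m)
        have h2 : Am m < (n:ℝ)+1 := by
          rw [← hφm]
          exact_mod_cast Nat.lt_floor_add_one (Am m)
        obtain ⟨i, _, hieq⟩ := Finset.exists_mem_eq_sup' Finset.univ_nonempty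
          (fun i => |c i - (m i : ℝ)|)
        refine ⟨i, ?_, fun j => lt_of_le_of_lt (hAm_ge m j) h2⟩
        have : Am m = |c i - (m i : ℝ)| := by simp only [hAm_def]; rw [hieq]
        rw [← this]; exact h1
      have hterm : ∀ m ∈ A.filter (fun m => φ m = n), e m ≤ (1 + (n:ℝ)/SD) ^ (-K) := by
        intro m hm
        exact he_le m n (le_of_eq ((Finset.mem_filter.mp hm).2).symm)
      calc ∑ m ∈ A.filter (fun m => φ m = n), e m
          ≤ (A.filter (fun m => φ m = n)).card • ((1 + (n:ℝ)/SD) ^ (-K)) :=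
            Finset.sum_le_card_nsmul _ _ _ hterm
        _ = ((A.filter (fun m => φ m = n)).card : ℝ) * (1 + (n:ℝ)/SD) ^ (-K) :=
            nsmul_eq_mul _ _
        _ ≤ H n := by
            simp only [hH_def]
            apply mul_le_mul_of_nonneg_right _ (le_of_lt (Real.rpow_pos_of_pos (by positivity) _))
            exact_mod_cast hcard
    have hT : ∀ n ∈ A.image φ, N ≤ n := by
      intro n hn
      obtain ⟨m, hm, rfl⟩ := Finset.mem_image.mp hn
      exact hA m hm
    set MM := (A.image φ).sup id + 1 with hMM_def
    have hTsub : A.image φ ⊆ (Finset.range MM).image (fun k => N + k) := by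
      intro n hn
      rw [Finset.mem_image]
      refine ⟨n - N, Finset.mem_range.mpr ?_, ?_⟩
      · have := Finset.le_sup (f := id) hn
        simp only [id] at this
        omega
      · have := hT n hn; omega
    -- the term-wise bound for H (N+k)
    have hHb : ∀ k : ℕ, H (N + k) ≤
        4*(d:ℝ)*3^(d-1) * SD^(d-1) * ((1 + (N:ℝ)/SD) + k * (1/SD)) ^ (-(s+1)) := by
      intro k
      have hb0 : (0:ℝ) < 1 + ((N+k : ℕ):ℝ)/SD := by positivity
      have hbeq : (1 + (N:ℝ)/SD) + k * (1/SD) = 1 + ((N+k:ℕ):ℝ)/SD := by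
        push_cast; ring
      rw [hbeq]
      simp only [hH_def]
      push_cast
      set b : ℝ := 1 + ((N:ℝ)+(k:ℝ))/SD with hb_def
      have hb0' : (0:ℝ) < b := by positivity
      have hb1 : (1:ℝ) ≤ b := by
        rw [hb_def]
        have : (0:ℝ) ≤ ((N:ℝ)+(k:ℝ))/SD := by positivity
        linarith
      -- (2(N+k)+3)^(d-1) ≤ 3^(d-1) * (N+k+1)^(d-1) ≤ 3^(d-1) * (SD*b)^(d-1)
      have hstep1 : (2*((N:ℝ)+(k:ℝ))+3)^(d-1) ≤ 3^(d-1) * (SD*b)^(d-1) := by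
        rw [← mul_pow]
        apply pow_le_pow_left₀ (by positivity)
        have hSDb : (N:ℝ) + (k:ℝ) + 1 ≤ SD * b := by
          rw [hb_def, mul_add, mul_one, mul_div_cancel₀ _ (ne_of_gt hSD0)]
          linarith
        nlinarith [Nat.cast_nonneg (α := ℝ) N, Nat.cast_nonneg (α := ℝ) k]
      have hstep2 : (SD*b)^(d-1) = SD^(d-1) * b^(d-1) := mul_pow _ _ _
      have hstep3 : (b:ℝ)^(d-1) * b^(-K) = b ^ (-(s+1)) := by
        rw [← Real.rpow_natCast b (d-1), ← Real.rpow_add hb0']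
        congr 1
        rw [hs_def]
        have hcast : ((d-1 : ℕ) : ℝ) = (d:ℝ) - 1 := by
          rw [Nat.cast_sub hd]; norm_num
        rw [hcast]; ring
      calc 4*(d:ℝ)*(2*((N:ℝ)+(k:ℝ))+3)^(d-1) * b^(-K)
          ≤ 4*(d:ℝ)*(3^(d-1) * (SD^(d-1) * b^(d-1))) * b^(-K) := by
            rw [← hstep2]
            apply mul_le_mul_of_nonneg_right _ (le_of_lt (Real.rpow_pos_of_pos hb0' _))
            apply mul_le_mul_of_nonneg_left hstep1 (by positivity)
        _ = (4*(d:ℝ)*3^(d-1)) * SD^(d-1) * (b^(d-1) * b^(-K)) := by ring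
        _ = 4*(d:ℝ)*3^(d-1) * SD^(d-1) * b ^ (-(s+1)) := by
            rw [← hstep3]
    -- assemble
    calc ∑ n ∈ A.image φ, ∑ m ∈ A.filter (fun m => φ m = n), e m
        ≤ ∑ n ∈ A.image φ, H n := Finset.sum_le_sum hfiber
      _ ≤ ∑ n ∈ (Finset.range MM).image (fun k => N + k), H n :=
          Finset.sum_le_sum_of_subset_of_nonneg hTsub (fun n _ _ => hH0 n)
      _ = ∑ k ∈ Finset.range MM, H (N + k) :=
          Finset.sum_image (by intro a _ b _ hab; simp only at hab; omega)
      _ ≤ ∑ k ∈ Finset.range MM,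
            4*(d:ℝ)*3^(d-1) * SD^(d-1) * ((1 + (N:ℝ)/SD) + k * (1/SD)) ^ (-(s+1)) :=
          Finset.sum_le_sum (fun k _ => hHb k)
      _ = 4*(d:ℝ)*3^(d-1) * SD^(d-1) *
            ∑ k ∈ Finset.range MM, ((1 + (N:ℝ)/SD) + k * (1/SD)) ^ (-(s+1)) := by
          rw [Finset.mul_sum]
      _ ≤ 4*(d:ℝ)*3^(d-1) * SD^(d-1) *
            ((1 + (N:ℝ)/SD) ^ (-s) * (1 + 1/(s * (1/SD)))) := by
          have haT : (1:ℝ) ≤ 1 + (N:ℝ)/SD := le_add_of_nonneg_right (by positivity)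
          exact mul_le_mul_of_nonneg_left
            (aux_telescope hs haT (by positivity) MM) (by positivity)
      _ ≤ C₁ * SD^d * (1 + (N:ℝ)/SD) ^ (-s) := by
          rw [hC₁_def]
          have h1 : 1 + 1/(s * (1/SD)) = 1 + SD/s := by
            rw [mul_one_div, one_div_div]
          rw [h1]
          have h2 : (0:ℝ) < (1 + (N:ℝ)/SD) ^ (-s) := Real.rpow_pos_of_pos (by positivity) _
          have h3 : SD^(d-1) * (1 + SD/s) ≤ SD^d * (1 + 1/s) := by
            have h4 : 1 + SD/s ≤ SD * (1 + 1/s) := by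
              rw [mul_add, mul_one, mul_one_div]
              linarith
            calc SD^(d-1) * (1 + SD/s) ≤ SD^(d-1) * (SD * (1 + 1/s)) := by
                  apply mul_le_mul_of_nonneg_left h4 (by positivity)
              _ = SD^d * (1 + 1/s) := by
                  rw [← mul_assoc, ← pow_succ, Nat.sub_add_cancel hd]
        -- combine
          have hC₁cast : ((4*d*3^(d-1) : ℕ) : ℝ) = 4*(d:ℝ)*3^(d-1) := by push_cast; ring
          rw [hC₁cast]
          calc 4*(d:ℝ)*3^(d-1) * SD^(d-1) * ((1 + (N:ℝ)/SD) ^ (-s) * (1 + SD/s))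
              = 4*(d:ℝ)*3^(d-1) * (SD^(d-1) * (1 + SD/s)) * (1 + (N:ℝ)/SD) ^ (-s) := by
                ring
            _ ≤ 4*(d:ℝ)*3^(d-1) * (SD^d * (1 + 1/s)) * (1 + (N:ℝ)/SD) ^ (-s) := by
                apply mul_le_mul_of_nonneg_right _ (le_of_lt h2)
                apply mul_le_mul_of_nonneg_left h3 (by positivity)
            _ = 4*(d:ℝ)*3^(d-1) * (1 + 1/s) * SD^d * (1 + (N:ℝ)/SD) ^ (-s) := by ring
  -- summability
  have hD0 : (0:ℝ) < D := lt_of_lt_of_le one_pos hD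
  have hsum_e : Summable e :=
    summable_of_sum_le (fun m => (he_pos m).le)
      (fun A => key 0 A (fun m _ => Nat.zero_le _))
  have hsum_gabs : Summable (fun m => |g m|) :=
    Summable.of_nonneg_of_le (fun m => abs_nonneg _) hg_le (hsum_e.mul_left (C₀ * M))
  have hsum_g : Summable g := hsum_gabs.of_abs
  have hsum_t : Summable t := by
    apply Summable.of_abs
    apply Summable.of_nonneg_of_le (fun m => abs_nonneg _) _ hsum_gabs
    intro m
    simp only [ht_def]
    by_cases hcm : ‖x - latt h m‖ ≤ Λ
    · simp [hcm]
    · simp [hcm]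
  have hsum_tg : Summable (fun m => |t m - g m|) := (hsum_t.sub hsum_g).abs
  -- the tail index
  set N₀ : ℕ := ⌊Λ / (h * sd)⌋₊ with hN₀_def
  have htail : ∀ m, ¬(‖x - latt h m‖ ≤ Λ) → N₀ ≤ φ m := by
    intro m hm
    have h1 : Λ < ‖w m‖ := by
      have : w m = x - latt h m := by rw [hw_def]
      rw [this]
      exact lt_of_not_ge hm
    have h2 : Λ < sd * (h * Am m) := lt_of_lt_of_le h1 (hup m)
    have h3 : Λ / (h * sd) ≤ Am m := by
      rw [div_le_iff₀ (by positivity)]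
      calc Λ ≤ sd * (h * Am m) := h2.le
        _ = Am m * (h * sd) := by ring
    exact Nat.floor_mono h3
  have hdiff_bound : ∑' m, |t m - g m| ≤
      C₀ * M * (C₁ * SD^d * (1 + (N₀:ℝ)/SD) ^ (-s)) := by
    apply Summable.tsum_le_of_sum_le hsum_tg
    intro A
    have hzero : ∀ m ∈ A, |t m - g m| ≠ 0 → ¬(‖x - latt h m‖ ≤ Λ) := by
      intro m _ hne hcm
      apply hne
      simp only [ht_def, if_pos hcm]
      simp
    calc ∑ m ∈ A, |t m - g m|
        = ∑ m ∈ A.filter (fun m => ¬(‖x - latt h m‖ ≤ Λ)), |t m - g m| :=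
          (Finset.sum_filter_of_ne hzero).symm
      _ ≤ ∑ m ∈ A.filter (fun m => ¬(‖x - latt h m‖ ≤ Λ)), C₀ * M * e m := by
          apply Finset.sum_le_sum
          intro m hm
          have hcm := (Finset.mem_filter.mp hm).2
          have : t m = 0 := by simp only [ht_def, if_neg hcm]
          rw [this, zero_sub, abs_neg]
          exact hg_le m
      _ = C₀ * M * ∑ m ∈ A.filter (fun m => ¬(‖x - latt h m‖ ≤ Λ)), e m := by
          rw [Finset.mul_sum]
      _ ≤ C₀ * M * (C₁ * SD^d * (1 + (N₀:ℝ)/SD) ^ (-s)) := by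
          apply mul_le_mul_of_nonneg_left _ (by positivity)
          exact key N₀ _ (fun m hm => htail m (Finset.mem_filter.mp hm).2)
  have hP0 : (0:ℝ) < D ^ (-(d:ℝ)/2) := Real.rpow_pos_of_pos hD0 _
  have hexp : truncQuasiInterp u ψ h D Λ x - quasiInterp u ψ h D x
      = D ^ (-(d:ℝ)/2) * ((∑' m, t m) - (∑' m, g m)) := by
    simp only [truncQuasiInterp, quasiInterp, ht_def, hg_def, hSD_def, mul_sub]
  have habs_le : |(∑' m, t m) - (∑' m, g m)| ≤ ∑' m, |t m - g m| := by
    rw [← Summable.tsum_sub hsum_t hsum_g]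
    have h1 : Summable (fun m => ‖t m - g m‖) := by
      simpa [Real.norm_eq_abs] using hsum_tg
    simpa [Real.norm_eq_abs] using norm_tsum_le_tsum_norm h1
  have hPSD : D ^ (-(d:ℝ)/2) * SD^d = 1 := by
    have h1 : SD^d = D ^ ((1/2 : ℝ) * d) := by
      rw [hSD_def, Real.sqrt_eq_rpow, Real.rpow_mul hD0.le, Real.rpow_natCast]
    rw [h1, ← Real.rpow_add hD0]
    rw [show -(d:ℝ)/2 + 1/2 * d = 0 by ring, Real.rpow_zero]
  have hlast : (1 + (N₀:ℝ)/SD) ^ (-s) ≤ sd ^ s * (SD * h / Λ) ^ s := by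
    have hρN : Λ / (h * sd) < (N₀:ℝ) + 1 := Nat.lt_floor_add_one _
    have hq0 : (0:ℝ) < Λ / (h * sd * SD) := by positivity
    have hq_le : Λ / (h * sd * SD) ≤ 1 + (N₀:ℝ)/SD := by
      rw [div_le_iff₀ (by positivity)]
      have h5 : Λ ≤ ((N₀:ℝ) + 1) * (h * sd) := by
        rw [← div_le_iff₀ (by positivity)]
        exact hρN.le
      have h6 : (1 + (N₀:ℝ)/SD) * SD = SD + N₀ := by field_simp
      have h7 : ((N₀:ℝ)+1) * (h*sd) ≤ (SD + (N₀:ℝ)) * (h * sd) := by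
        have : (1:ℝ) + N₀ ≤ SD + N₀ := by linarith
        apply mul_le_mul_of_nonneg_right (by linarith) (by positivity)
      calc Λ ≤ ((N₀:ℝ)+1)*(h*sd) := h5
        _ ≤ (SD + (N₀:ℝ)) * (h*sd) := h7
        _ = (1 + (N₀:ℝ)/SD) * (h * sd * SD) := by
            rw [show (1 + (N₀:ℝ)/SD) * (h * sd * SD) = ((1 + (N₀:ℝ)/SD) * SD) * (h * sd) by ring,
              h6]
    have h8 : (1 + (N₀:ℝ)/SD) ^ (-s) ≤ (Λ / (h * sd * SD)) ^ (-s) :=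
      Real.rpow_le_rpow_of_nonpos hq0 hq_le (by linarith)
    have h9 : (Λ / (h * sd * SD)) ^ (-s) = (h * sd * SD / Λ) ^ s := by
      rw [Real.rpow_neg hq0.le, ← Real.inv_rpow hq0.le, inv_div]
    have h10 : (h * sd * SD / Λ) ^ s = sd ^ s * (SD * h / Λ) ^ s := by
      rw [← Real.mul_rpow hsd0.le (by positivity)]
      congr 1
      field_simp
    rw [h9, h10] at h8
    exact h8
  -- final chain
  calc |truncQuasiInterp u ψ h D Λ x - quasiInterp u ψ h D x|
      = D ^ (-(d:ℝ)/2) * |(∑' m, t m) - (∑' m, g m)| := by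
        rw [hexp, abs_mul, abs_of_pos hP0]
    _ ≤ D ^ (-(d:ℝ)/2) * ∑' m, |t m - g m| :=
        mul_le_mul_of_nonneg_left habs_le hP0.le
    _ ≤ D ^ (-(d:ℝ)/2) * (C₀ * M * (C₁ * SD^d * (1 + (N₀:ℝ)/SD) ^ (-s))) :=
        mul_le_mul_of_nonneg_left hdiff_bound hP0.le
    _ = (C₀ * C₁ * (1 + (N₀:ℝ)/SD) ^ (-s) * M) * (D ^ (-(d:ℝ)/2) * SD^d) := by ring
    _ = C₀ * C₁ * (1 + (N₀:ℝ)/SD) ^ (-s) * M := by rw [hPSD, mul_one]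
    _ ≤ C₀ * C₁ * (sd ^ s * (SD * h / Λ) ^ s) * M := by
        apply mul_le_mul_of_nonneg_right _ hM0
        exact mul_le_mul_of_nonneg_left hlast (by positivity)
    _ = C₀ * C₁ * sd ^ s * (SD * h / Λ) ^ s * M := by ring
end
end

section
/- Let X be a nonempty subset of ℝ^d, let L₀ ≥ 0, and let μ : X → ℝ^m be bounded and Lipschitz continuous with rank L₀ (‖μ(x) − μ(y)‖ ≤ L₀‖x − y‖₂ for all x, y ∈ X). Then for every ε > 0 there exist a Schwartz function ψ : ℝ^d → ℝ, parameters h > 0, D > 0, r₀ > 0, and a bounded function μ_E : ℝ^d → ℝ^m agreeing with μ on X, such that the truncated quasi-interpolant μ†(x) := D^{−d/2} Σ_{m ∈ ℤ^d, ‖x − mh‖₂ ≤ r₀h} μ_E(mh) ψ((x − mh)/(h√D)) satisfies ‖μ(x) − μ†(x)‖ ≤ ε for every x ∈ X. -/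
noncomputable section

open scoped BigOperators

/-- The (componentwise) truncated quasi-interpolant of a vector-valued function `v`:
`v†(x) = D^{-d/2} Σ_{m ∈ ℤ^d, ‖x − mh‖ ≤ r₀ h} ψ((x − mh)/(h√D)) • v(mh)`. -/
def truncQuasiInterpVec {d n : ℕ} (v : EuclideanSpace ℝ (Fin d) → EuclideanSpace ℝ (Fin n))
    (ψ : EuclideanSpace ℝ (Fin d) → ℝ) (h D r₀ : ℝ)
    (x : EuclideanSpace ℝ (Fin d)) : EuclideanSpace ℝ (Fin n) :=
  (D ^ (-(d : ℝ) / 2)) •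
    ∑' m : Fin d → ℤ,
      if ‖x - latt h m‖ ≤ r₀ * h then
        ψ ((h * Real.sqrt D)⁻¹ • (x - latt h m)) • v (latt h m)
      else 0


/-- 1-d bump forming a partition of unity under integer translates. -/
def quasiPhi (t : ℝ) : ℝ := Real.smoothTransition (t + 1) - Real.smoothTransition t

open scoped ContDiff in
lemma quasiPhi_contDiff : ContDiff ℝ ∞ quasiPhi := by
  have h0 : ContDiff ℝ ∞ Real.smoothTransition := Real.smoothTransition.contDiff (n := ⊤)
  have h1 : ContDiff ℝ ∞ fun t : ℝ => Real.smoothTransition (t + 1) :=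
    h0.comp (contDiff_id.add contDiff_const)
  exact h1.sub h0

lemma abs_quasiPhi_le_one (t : ℝ) : |quasiPhi t| ≤ 1 := by
  have h1 := Real.smoothTransition.nonneg (t + 1)
  have h2 := Real.smoothTransition.le_one (t + 1)
  have h3 := Real.smoothTransition.nonneg t
  have h4 := Real.smoothTransition.le_one t
  rw [abs_le]; constructor <;> simp [quasiPhi] <;> linarith

lemma quasiPhi_eq_zero (t : ℝ) (h : 1 ≤ |t|) : quasiPhi t = 0 := by
  rcases abs_le.mp (le_refl |t|) with ⟨h1, h2⟩
  rcases le_abs.mp h with h' | h'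
  · simp [quasiPhi, Real.smoothTransition.one_of_one_le h',
      Real.smoothTransition.one_of_one_le (by linarith : (1:ℝ) ≤ t + 1)]
  · simp [quasiPhi, Real.smoothTransition.zero_of_nonpos (by linarith : t ≤ 0),
      Real.smoothTransition.zero_of_nonpos (by linarith : t + 1 ≤ 0)]

lemma abs_lt_one_of_quasiPhi_ne_zero {t : ℝ} (h : quasiPhi t ≠ 0) : |t| < 1 := by
  by_contra h'; exact h (quasiPhi_eq_zero t (not_lt.mp h'))

lemma Icc_int_succ_right (a b : ℤ) (h : a ≤ b + 1) :
    Finset.Icc a (b + 1) = insert (b + 1) (Finset.Icc a b) := by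
  ext k; simp only [Finset.mem_Icc, Finset.mem_insert]; omega

lemma telescope_Icc (G : ℤ → ℝ) (a : ℤ) : ∀ b, a ≤ b →
    ∑ k ∈ Finset.Icc a b, (G k - G (k + 1)) = G a - G (b + 1) := by
  refine Int.le_induction ?_ ?_
  · simp
  · intro b hb ih
    rw [Icc_int_succ_right a b (by omega), Finset.sum_insert (by simp), ih]
    ring

lemma quasiPhi_sum (t : ℝ) :
    ∑ k ∈ Finset.Icc (⌈t⌉ - 1) (⌊t⌋ + 1), quasiPhi (t - k) = 1 := by
  have hab : ⌈t⌉ - 1 ≤ ⌊t⌋ + 1 := by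
    have := Int.ceil_le_floor_add_one t; omega
  set G : ℤ → ℝ := fun k => Real.smoothTransition (t - k + 1) with hG
  have key : ∀ k : ℤ, quasiPhi (t - k) = G k - G (k + 1) := by
    intro k
    have : t - ((k : ℝ) + 1) + 1 = t - k := by ring
    simp only [hG, quasiPhi]; push_cast; rw [this]
  calc ∑ k ∈ Finset.Icc (⌈t⌉ - 1) (⌊t⌋ + 1), quasiPhi (t - k)
      = ∑ k ∈ Finset.Icc (⌈t⌉ - 1) (⌊t⌋ + 1),
          (G k - G (k + 1)) := Finset.sum_congr rfl fun k _ => key k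
    _ = G (⌈t⌉ - 1) - G (⌊t⌋ + 1 + 1) := telescope_Icc G _ _ hab
    _ = 1 := by
        have e1 : G (⌈t⌉ - 1) = 1 := by
          apply Real.smoothTransition.one_of_one_le
          have := Int.ceil_lt_add_one t; push_cast; linarith
        have e2 : G (⌊t⌋ + 1 + 1) = 0 := by
          apply Real.smoothTransition.zero_of_nonpos
          have := Int.lt_floor_add_one t; push_cast; linarith
        rw [e1, e2]; ring

open scoped ContDiff

/-- Tensor-product bump on Euclidean space. -/
def quasiPsiFun (d : ℕ) : EuclideanSpace ℝ (Fin d) → ℝ := fun y => ∏ i, quasiPhi (y i)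

lemma quasiPsiFun_contDiff (d : ℕ) : ContDiff ℝ ∞ (quasiPsiFun d) := by
  apply contDiff_prod
  intro i _
  exact quasiPhi_contDiff.comp (EuclideanSpace.proj (𝕜 := ℝ) i).contDiff

lemma coord_abs_lt_one_of_ne_zero {d : ℕ} {y : EuclideanSpace ℝ (Fin d)}
    (h : quasiPsiFun d y ≠ 0) : ∀ i, |y i| < 1 := by
  intro i
  have := Finset.prod_ne_zero_iff.mp h i (Finset.mem_univ i)
  exact abs_lt_one_of_quasiPhi_ne_zero this

lemma norm_le_sqrt_of_coords {d : ℕ} {y : EuclideanSpace ℝ (Fin d)} {c : ℝ} (hc : 0 ≤ c)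
    (h : ∀ i, |y i| ≤ c) : ‖y‖ ≤ Real.sqrt d * c := by
  rw [EuclideanSpace.norm_eq]
  have : ∑ i, ‖y i‖ ^ 2 ≤ ∑ _i : Fin d, c ^ 2 := by
    refine Finset.sum_le_sum fun i _ => ?_
    rw [Real.norm_eq_abs]
    exact pow_le_pow_left₀ (abs_nonneg _) (h i) 2
  refine (Real.sqrt_le_sqrt this).trans ?_
  rw [Finset.sum_const, Finset.card_univ, Fintype.card_fin, nsmul_eq_mul]
  rw [Real.sqrt_mul (by positivity), Real.sqrt_sq hc]

lemma quasiPsiFun_hcs (d : ℕ) : HasCompactSupport (quasiPsiFun d) := by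
  apply HasCompactSupport.intro
    (isCompact_closedBall (0 : EuclideanSpace ℝ (Fin d)) (Real.sqrt d * 1))
  intro y hy
  by_contra h
  apply hy
  rw [Metric.mem_closedBall, dist_zero_right]
  exact norm_le_sqrt_of_coords zero_le_one fun i => (coord_abs_lt_one_of_ne_zero h i).le

/-- The generating function as a Schwartz map. -/
def quasiPsi (d : ℕ) : SchwartzMap (EuclideanSpace ℝ (Fin d)) ℝ where
  toFun := quasiPsiFun d
  smooth' := quasiPsiFun_contDiff d
  decay' := by
    intro k m
    have h1 : HasCompactSupport (iteratedFDeriv ℝ m (quasiPsiFun d)) :=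
      (quasiPsiFun_hcs d).iteratedFDeriv m
    have hcont : Continuous (iteratedFDeriv ℝ m (quasiPsiFun d)) :=
      (quasiPsiFun_contDiff d).continuous_iteratedFDeriv (by exact_mod_cast le_top)
    have h2 : HasCompactSupport fun x : EuclideanSpace ℝ (Fin d) =>
        ‖x‖ ^ k * ‖iteratedFDeriv ℝ m (quasiPsiFun d) x‖ := by
      exact (h1.norm).mul_left
    obtain ⟨C, hC⟩ := Continuous.bounded_above_of_compact_support
      (by fun_prop) h2
    refine ⟨C, fun x => ?_⟩
    have := hC x
    rw [Real.norm_eq_abs, abs_of_nonneg (by positivity)] at this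
    exact this


/-- Coordinates are dominated by the Euclidean norm. -/
lemma coord_abs_le_norm {k : ℕ} (v : EuclideanSpace ℝ (Fin k)) (i : Fin k) : |v i| ≤ ‖v‖ := by
  rw [EuclideanSpace.norm_eq]
  have h1 : ‖v i‖ ^ 2 ≤ ∑ j, ‖v j‖ ^ 2 :=
    Finset.single_le_sum (f := fun j => ‖v j‖ ^ 2) (fun j _ => by positivity) (Finset.mem_univ i)
  calc |v i| = Real.sqrt (‖v i‖ ^ 2) := by
        rw [Real.sqrt_sq_eq_abs, Real.norm_eq_abs, abs_abs]
    _ ≤ _ := Real.sqrt_le_sqrt h1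

set_option maxHeartbeats 1000000 in
/-- **One-shot uniform approximation of a bounded Lipschitz feedback policy**
(assertion (a) of the paper's main theorem).  For every bounded Lipschitz
`μ : X → ℝ^m` on a nonempty set `X ⊆ ℝ^d` and every `ε > 0` there exist a Schwartz
generating function `ψ`, parameters `h, D, r₀ > 0`, and a bounded extension `μ_E` of `μ`
to all of `ℝ^d`, such that the truncated quasi-interpolant `μ†` of `μ_E` is uniformly
`ε`-close to `μ` on `X`. -/
theorem quasiInterp_feedback_synthesis {d n : ℕ}
    (X : Set (EuclideanSpace ℝ (Fin d))) (hX : X.Nonempty)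
    (L₀ : ℝ) (hL₀ : 0 ≤ L₀)
    (μ : EuclideanSpace ℝ (Fin d) → EuclideanSpace ℝ (Fin n))
    (hbdd : ∃ C : ℝ, ∀ x ∈ X, ‖μ x‖ ≤ C)
    (hLip : ∀ x ∈ X, ∀ y ∈ X, ‖μ x - μ y‖ ≤ L₀ * ‖x - y‖) :
    ∀ ε : ℝ, 0 < ε →
      ∃ (ψ : SchwartzMap (EuclideanSpace ℝ (Fin d)) ℝ) (h D r₀ : ℝ)
        (μE : EuclideanSpace ℝ (Fin d) → EuclideanSpace ℝ (Fin n)),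
        0 < h ∧ 0 < D ∧ 0 < r₀ ∧
        (∃ C : ℝ, ∀ x, ‖μE x‖ ≤ C) ∧
        (∀ x ∈ X, μE x = μ x) ∧
        ∀ x ∈ X, ‖μ x - truncQuasiInterpVec μE (⇑ψ) h D r₀ x‖ ≤ ε := by
  intro ε hε
  obtain ⟨C₀, hC₀⟩ := hbdd
  set C : ℝ := max C₀ 0 with hCdef
  have hCnn : 0 ≤ C := le_max_right _ _
  have hμC : ∀ x ∈ X, ‖μ x‖ ≤ C := fun x hx => (hC₀ x hx).trans (le_max_left _ _)
  -- Lipschitz extension of each component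
  have hlip : ∀ i : Fin n, LipschitzOnWith L₀.toNNReal (fun x => μ x i) X := by
    intro i
    rw [lipschitzOnWith_iff_dist_le_mul]
    intro x hx y hy
    rw [Real.dist_eq, dist_eq_norm, Real.coe_toNNReal _ hL₀]
    have h1 : |μ x i - μ y i| ≤ ‖μ x - μ y‖ := by
      have := coord_abs_le_norm (μ x - μ y) i
      simpa [PiLp.sub_apply] using this
    exact h1.trans (hLip x hx y hy)
  choose g hgLip hgEq using fun i => (hlip i).extend_real
  -- truncation to the cube [-C, C]
  set cl : ℝ → ℝ := fun u => max (-C) (min C u) with hcldef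
  have hclLip : ∀ a b : ℝ, |cl a - cl b| ≤ |a - b| := by
    intro a b
    have h1 : |max (min C a) (-C) - max (min C b) (-C)| ≤ |min C a - min C b| :=
      abs_max_sub_max_le_abs _ _ _
    have h2 : |min C a - min C b| ≤ max |C - C| |a - b| := abs_min_sub_min_le_max _ _ _ _
    rw [sub_self, abs_zero, max_eq_right (abs_nonneg _)] at h2
    simpa [hcldef, max_comm] using h1.trans h2
  have hclmem : ∀ u : ℝ, |cl u| ≤ C := by
    intro u
    rw [abs_le]
    exact ⟨le_max_left _ _, max_le (by linarith) (min_le_left _ _)⟩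
  have hclid : ∀ u : ℝ, |u| ≤ C → cl u = u := by
    intro u hu
    rcases abs_le.mp hu with ⟨h1, h2⟩
    rw [hcldef]
    simp only [min_eq_right h2]
    exact max_eq_right h1
  set μE : EuclideanSpace ℝ (Fin d) → EuclideanSpace ℝ (Fin n) :=
    fun x => WithLp.toLp 2 (fun i => cl (g i x) : Fin n → ℝ) with hμEdef
  have hμEcoord : ∀ y i, μE y i = cl (g i y) := fun y i => rfl
  have hμEeq : ∀ x ∈ X, μE x = μ x := by
    intro x hx
    ext i
    rw [hμEcoord, ← hgEq i hx]
    exact hclid _ ((coord_abs_le_norm (μ x) i).trans (hμC x hx))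
  set K : ℝ := Real.sqrt n * L₀ with hKdef
  have hKnn : 0 ≤ K := by positivity
  have hμELip : ∀ x ∈ X, ∀ y, ‖μ x - μE y‖ ≤ K * ‖x - y‖ := by
    intro x hx y
    have hc : 0 ≤ L₀ * ‖x - y‖ := by positivity
    have h1 : ‖μ x - μE y‖ ≤ Real.sqrt n * (L₀ * ‖x - y‖) := by
      apply norm_le_sqrt_of_coords hc
      intro i
      have e1 : (μ x - μE y) i = cl (g i x) - cl (g i y) := by
        have : μ x i = cl (g i x) := by rw [← hμEeq x hx]
        simp [PiLp.sub_apply, this, hμEcoord]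
      rw [e1]
      refine (hclLip _ _).trans ?_
      have := (hgLip i).dist_le_mul x y
      rwa [Real.dist_eq, dist_eq_norm, Real.coe_toNNReal _ hL₀] at this
    calc ‖μ x - μE y‖ ≤ Real.sqrt n * (L₀ * ‖x - y‖) := h1
      _ = K * ‖x - y‖ := by rw [hKdef]; ring
  set B : ℝ := 3 ^ d * (K * Real.sqrt d) with hBdef
  have hBnn : 0 ≤ B := by positivity
  set hh : ℝ := ε / (B + 1) with hhdef
  have hhpos : 0 < hh := by positivity
  refine ⟨quasiPsi d, hh, 1, Real.sqrt d + 1, μE, hhpos, one_pos, by positivity,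
    ⟨Real.sqrt n * C, fun y => norm_le_sqrt_of_coords hCnn fun i => hclmem _⟩, hμEeq, ?_⟩
  intro x hx
  -- the active window
  set t : Fin d → ℝ := fun i => x i / hh with htdef
  set lo : Fin d → ℤ := fun i => ⌈t i⌉ - 1 with hlodef
  set hi : Fin d → ℤ := fun i => ⌊t i⌋ + 1 with hhidef
  set S : Finset (Fin d → ℤ) := Fintype.piFinset fun i => Finset.Icc (lo i) (hi i) with hSdef
  set w : (Fin d → ℤ) → ℝ := fun m => ∏ i, quasiPhi (t i - m i) with hwdef
  have harg : ∀ m : Fin d → ℤ,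
      (quasiPsi d) ((hh * Real.sqrt 1)⁻¹ • (x - latt hh m)) = w m := by
    intro m
    have hcoord : ∀ i, ((hh * Real.sqrt 1)⁻¹ • (x - latt hh m)) i = t i - m i := by
      intro i
      rw [PiLp.smul_apply, PiLp.sub_apply, smul_eq_mul, Real.sqrt_one, mul_one, htdef]
      show hh⁻¹ * (x i - hh * (m i)) = x i / hh - m i
      field_simp
    show quasiPsiFun d _ = w m
    unfold quasiPsiFun
    exact Finset.prod_congr rfl fun i _ => by rw [hcoord i]
  have hwS : ∀ m, w m ≠ 0 → ∀ i, |t i - m i| < 1 := fun m hm i =>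
    abs_lt_one_of_quasiPhi_ne_zero (Finset.prod_ne_zero_iff.mp hm i (Finset.mem_univ i))
  have hmemS : ∀ m, w m ≠ 0 → m ∈ S := by
    intro m hm
    rw [hSdef, Fintype.mem_piFinset]
    intro i
    rcases abs_lt.mp (hwS m hm i) with ⟨h1, h2⟩
    rw [Finset.mem_Icc]
    simp only [hlodef, hhidef]
    constructor
    · have : (⌈t i⌉ : ℤ) ≤ m i + 1 := Int.ceil_le.mpr (by push_cast; linarith)
      omega
    · have : (m i : ℤ) - 1 ≤ ⌊t i⌋ := Int.le_floor.mpr (by push_cast; linarith)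
      omega
  have hdist : ∀ m, w m ≠ 0 → ‖x - latt hh m‖ ≤ Real.sqrt d * hh := by
    intro m hm
    apply norm_le_sqrt_of_coords hhpos.le
    intro i
    have e1 : (x - latt hh m) i = hh * (t i - m i) := by
      rw [PiLp.sub_apply, htdef]
      show x i - hh * (m i) = hh * (x i / hh - m i)
      field_simp
    rw [e1, abs_mul, abs_of_pos hhpos]
    calc hh * |t i - m i| ≤ hh * 1 :=
          mul_le_mul_of_nonneg_left (hwS m hm i).le hhpos.le
      _ = hh := mul_one hh
  have hFall : ∀ m : Fin d → ℤ,
      (if ‖x - latt hh m‖ ≤ (Real.sqrt d + 1) * hh then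
        (quasiPsi d) ((hh * Real.sqrt 1)⁻¹ • (x - latt hh m)) • μE (latt hh m)
      else 0) = w m • μE (latt hh m) := by
    intro m
    by_cases hw : w m = 0
    · split_ifs with hcond
      · rw [harg m, hw, zero_smul]
      · rw [hw, zero_smul]
    · have hcond : ‖x - latt hh m‖ ≤ (Real.sqrt d + 1) * hh := by
        refine (hdist m hw).trans ?_
        nlinarith [hhpos.le]
      rw [if_pos hcond, harg m]
  have hTQ : truncQuasiInterpVec μE (⇑(quasiPsi d)) hh 1 (Real.sqrt d + 1) x
      = ∑ m ∈ S, w m • μE (latt hh m) := by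
    unfold truncQuasiInterpVec
    rw [Real.one_rpow, one_smul]
    rw [tsum_eq_sum (s := S) (fun m hm => by
      rw [hFall m]
      by_cases hw : w m = 0
      · rw [hw, zero_smul]
      · exact absurd (hmemS m hw) hm)]
    exact Finset.sum_congr rfl fun m _ => hFall m
  have hsum1 : ∑ m ∈ S, w m = 1 := by
    rw [hSdef, hwdef,
      ← Finset.prod_univ_sum (fun i => Finset.Icc (lo i) (hi i))
        (fun i k => quasiPhi (t i - k))]
    refine Finset.prod_eq_one fun i _ => ?_
    simp only [hlodef, hhidef]
    exact quasiPhi_sum (t i)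
  have hcard : (S.card : ℝ) ≤ 3 ^ d := by
    have h1 : S.card ≤ 3 ^ d := by
      rw [hSdef, Fintype.card_piFinset]
      calc ∏ i, (Finset.Icc (lo i) (hi i)).card ≤ ∏ _i : Fin d, 3 :=
            Finset.prod_le_prod' fun i _ => by
              rw [Int.card_Icc]
              simp only [hlodef, hhidef]
              have := Int.floor_le_ceil (t i)
              omega
        _ = 3 ^ d := by simp
    exact_mod_cast h1
  rw [hTQ]
  have hsplit : μ x - ∑ m ∈ S, w m • μE (latt hh m)
      = ∑ m ∈ S, w m • (μ x - μE (latt hh m)) := by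
    calc μ x - ∑ m ∈ S, w m • μE (latt hh m)
        = ∑ m ∈ S, w m • μ x - ∑ m ∈ S, w m • μE (latt hh m) := by
          rw [← Finset.sum_smul, hsum1, one_smul]
      _ = ∑ m ∈ S, (w m • μ x - w m • μE (latt hh m)) := (Finset.sum_sub_distrib _ _).symm
      _ = ∑ m ∈ S, w m • (μ x - μE (latt hh m)) := by
          exact Finset.sum_congr rfl fun m _ => (smul_sub _ _ _).symm
  rw [hsplit]
  calc ‖∑ m ∈ S, w m • (μ x - μE (latt hh m))‖
      ≤ ∑ m ∈ S, ‖w m • (μ x - μE (latt hh m))‖ := norm_sum_le _ _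
    _ ≤ ∑ _m ∈ S, K * (Real.sqrt d * hh) := by
        refine Finset.sum_le_sum fun m _ => ?_
        rw [norm_smul, Real.norm_eq_abs]
        by_cases hw : w m = 0
        · rw [hw, abs_zero, zero_mul]; positivity
        · have h1 : |w m| ≤ 1 := by
            rw [hwdef]
            calc |∏ i, quasiPhi (t i - m i)| = ∏ i, |quasiPhi (t i - m i)| :=
                  Finset.abs_prod _ _
              _ ≤ 1 := Finset.prod_le_one (fun i _ => abs_nonneg _)
                  (fun i _ => abs_quasiPhi_le_one _)
          have h2 : ‖μ x - μE (latt hh m)‖ ≤ K * (Real.sqrt d * hh) :=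
            (hμELip x hx (latt hh m)).trans
              (mul_le_mul_of_nonneg_left (hdist m hw) hKnn)
          calc |w m| * ‖μ x - μE (latt hh m)‖
              ≤ 1 * (K * (Real.sqrt d * hh)) :=
                mul_le_mul h1 h2 (norm_nonneg _) zero_le_one
            _ = K * (Real.sqrt d * hh) := one_mul _
    _ = (S.card : ℝ) * (K * (Real.sqrt d * hh)) := by
        rw [Finset.sum_const, nsmul_eq_mul]
    _ ≤ 3 ^ d * (K * (Real.sqrt d * hh)) :=
        mul_le_mul_of_nonneg_right hcard (by positivity)
    _ = B * hh := by rw [hBdef]; ring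
    _ ≤ ε := by
        rw [hhdef, mul_div_assoc']
        rw [div_le_iff₀ (by positivity)]
        nlinarith [hε.le, hBnn]
end
end

section
/- The one-dimensional Laguerre–Gaussian generating function ψ(x) := π^{-1/2} (15/8 − (5/2)x² + (1/2)x⁴) e^{-x²} satisfies the moment condition of order 6: ∫_ℝ ψ(x) dx = 1 and ∫_ℝ x^k ψ(x) dx = 0 for every integer k with 1 ≤ k ≤ 5. -/
open Real MeasureTheory Set

noncomputable section

theorem Function.Odd.integral_eq_zero {G E : Type*} [NormedAddCommGroup E] [NormedSpace ℝ E]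
    [MeasurableSpace G] [AddGroup G] [MeasurableNeg G] {μ : Measure G} [μ.IsNegInvariant]
    {f : G → E} (hf : f.Odd) : ∫ x, f x ∂μ = 0 := by
  have h_neg : -∫ x, f x ∂μ = ∫ x, f x ∂μ := by
    simpa only [hf.eq, integral_neg] using integral_neg_eq_self f μ
  have h_two : (2 : ℝ) • ∫ x, f x ∂μ = 0 := by
    rw [two_smul]
    nth_rewrite 1 [← h_neg]
    exact neg_add_cancel _
  exact (smul_eq_zero.mp h_two).resolve_left two_ne_zero

theorem integral_pow_odd_mul_eq_zero {f : ℝ → ℝ} (hf : f.Even) (n : ℕ) :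
    ∫ x, x ^ (2 * n + 1) * f x = 0 :=
  Function.Odd.integral_eq_zero fun x => by
    rw [(odd_two_mul_add_one n).neg_pow, hf.eq, neg_mul]

theorem integrable_pow_mul_exp_neg_sq (k : ℕ) :
    Integrable fun x : ℝ => x ^ k * exp (-x ^ 2) := by
  simpa [rpow_natCast] using
    integrable_rpow_mul_exp_neg_mul_sq one_pos (s := k) (by linarith [k.cast_nonneg (α := ℝ)])

theorem integral_pow_two_mul_mul_exp_neg_sq (n : ℕ) :
    ∫ x : ℝ, x ^ (2 * n) * exp (-x ^ 2) = Gamma (n + 1 / 2) := by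
  have h_even : ∫ x : ℝ, x ^ (2 * n) * exp (-x ^ 2)
      = 2 * ∫ x in Ioi (0 : ℝ), x ^ (2 * n) * exp (-x ^ 2) := by
    rw [← integral_comp_abs (f := fun x : ℝ => x ^ (2 * n) * exp (-x ^ 2))]
    simp only [pow_mul, sq_abs]
  have h_half_line : ∫ x in Ioi (0 : ℝ), x ^ (2 * n) * exp (-x ^ 2)
      = 1 / 2 * Gamma ((((2 * n : ℕ) : ℝ) + 1) / 2) := by
    rw [← integral_rpow_mul_exp_neg_rpow two_pos (neg_one_lt_zero.trans_le (by positivity))]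
    refine setIntegral_congr_fun measurableSet_Ioi fun x _ => ?_
    rw [rpow_natCast, rpow_two]
  rw [h_even, h_half_line, show (((2 * n : ℕ) : ℝ) + 1) / 2 = n + 1 / 2 by push_cast; ring]
  ring

def laguerreGaussian (x : ℝ) : ℝ :=
  π ^ (-(1 : ℝ) / 2) * (15 / 8 - 5 / 2 * x ^ 2 + 1 / 2 * x ^ 4) * exp (-x ^ 2)

theorem laguerreGaussian_even : laguerreGaussian.Even := fun x => by
  simp only [laguerreGaussian, even_two.neg_pow, (by decide : Even 4).neg_pow]

/-- With `s = m + 1/2` and `Γ(s + 1) = sΓ(s)`, the Laguerre weights turn the even moment into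
`Γ(s) (15/8 - 5s/2 + s(s+1)/2) = Γ(s) (s - 3/2)(s - 5/2) / 2`. -/
theorem integral_pow_two_mul_mul_laguerreGaussian (m : ℕ) :
    ∫ x, x ^ (2 * m) * laguerreGaussian x
      = π ^ (-(1 : ℝ) / 2) * ((m - 1) * (m - 2) / 2 * Gamma (m + 1 / 2)) := by
  set g : ℕ → ℝ → ℝ := fun k x => x ^ k * exp (-x ^ 2)
  have h_expand : (fun x => x ^ (2 * m) * laguerreGaussian x) = fun x => π ^ (-(1 : ℝ) / 2) *
      (15 / 8 * g (2 * m) x - 5 / 2 * g (2 * (m + 1)) x + 1 / 2 * g (2 * (m + 2)) x) := by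
    ext x
    simp only [g, laguerreGaussian]
    ring
  have hg (k : ℕ) (c : ℝ) : Integrable fun x => c * g k x :=
    (integrable_pow_mul_exp_neg_sq k).const_mul c
  have h_shift (s : ℝ) (hs : 0 < s) : Gamma (s + 1) = s * Gamma s := Gamma_add_one hs.ne'
  rw [h_expand, integral_const_mul, integral_add (by exact (hg _ _).sub (hg _ _)) (hg _ _),
    integral_sub (hg _ _) (hg _ _), integral_const_mul, integral_const_mul, integral_const_mul]
  simp only [g, integral_pow_two_mul_mul_exp_neg_sq]
  push_cast
  rw [show (m : ℝ) + 2 + 1 / 2 = (m + 1 / 2 + 1) + 1 by ring,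
    show (m : ℝ) + 1 + 1 / 2 = m + 1 / 2 + 1 by ring,
    h_shift (m + 1 / 2 + 1) (by positivity), h_shift (m + 1 / 2) (by positivity)]
  ring

/-- **Moment condition of order 6 for the Laguerre–Gaussian generating function**
`ψ(x) = π^{-1/2} (15/8 − (5/2)x² + (1/2)x⁴) e^{-x²}`:
its integral is `1` and its moments of orders `1, …, 5` vanish. -/
theorem laguerreGaussian_order_six_moment_condition :
    (∫ x : ℝ, Real.pi ^ (-(1 : ℝ) / 2) *
        (15 / 8 - 5 / 2 * x ^ 2 + 1 / 2 * x ^ 4) * Real.exp (-x ^ 2)) = 1 ∧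
      ∀ k : ℕ, 1 ≤ k → k ≤ 5 →
        (∫ x : ℝ, x ^ k * (Real.pi ^ (-(1 : ℝ) / 2) *
            (15 / 8 - 5 / 2 * x ^ 2 + 1 / 2 * x ^ 4) * Real.exp (-x ^ 2))) = 0 := by
  change ∫ x, laguerreGaussian x = 1 ∧
    ∀ k : ℕ, 1 ≤ k → k ≤ 5 → ∫ x, x ^ k * laguerreGaussian x = 0
  refine ⟨?_, fun k hk₁ hk₅ => ?_⟩
  · have h_mass := integral_pow_two_mul_mul_laguerreGaussian 0
    simp only [mul_zero, pow_zero, one_mul, Nat.cast_zero, zero_add] at h_mass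
    rw [h_mass, Gamma_one_half_eq, sqrt_eq_rpow]
    norm_num [← rpow_add pi_pos]
  · obtain ⟨m, rfl | rfl⟩ := Nat.even_or_odd' k
    · have hm : (m : ℝ) = 1 ∨ (m : ℝ) = 2 := by norm_cast; omega
      rw [integral_pow_two_mul_mul_laguerreGaussian]
      rcases hm with hm | hm <;> simp [hm]
    · exact integral_pow_odd_mul_eq_zero laguerreGaussian_even m
end
end

section
/- The one-dimensional Laguerre–Gaussian generating function ψ(x) := π^{-1/2} (315/128 − (105/16)x² + (63/16)x⁴ − (3/4)x⁶ + (1/24)x⁸) e^{-x²} satisfies the moment condition of order 10: ∫_ℝ ψ(x) dx = 1 and ∫_ℝ x^k ψ(x) dx = 0 for every integer k with 1 ≤ k ≤ 9. -/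
open MeasureTheory Real

noncomputable section

/-- The `n`-th Gaussian moment `∫ x^n e^{-x²}`. -/
def gI (n : ℕ) : ℝ := ∫ x : ℝ, x ^ n * Real.exp (-x ^ 2)

lemma gInt (n : ℕ) : Integrable (fun x : ℝ => x ^ n * Real.exp (-x ^ 2)) := by
  have h := integrable_rpow_mul_exp_neg_mul_sq (b := 1) one_pos
    (s := (n : ℝ)) (by exact_mod_cast neg_one_lt_zero.trans_le (Nat.cast_nonneg n))
  simpa [Real.rpow_natCast] using h

lemma gI_rec (n : ℕ) : 2 * gI (n + 2) = (n + 1) * gI n := by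
  have hderiv : ∀ x : ℝ, HasDerivAt (fun x : ℝ => x ^ (n + 1) * Real.exp (-x ^ 2))
      ((n + 1 : ℝ) * (x ^ n * Real.exp (-x ^ 2)) - 2 * (x ^ (n + 2) * Real.exp (-x ^ 2))) x := by
    intro x
    have h1 : HasDerivAt (fun x : ℝ => -x ^ 2) (-(2 * x)) x := by
      simpa using (hasDerivAt_pow 2 x).fun_neg
    have h2 := (hasDerivAt_pow (n + 1) x).fun_mul h1.exp
    refine h2.congr_deriv ?_
    push_cast
    ring
  have h0 := integral_eq_zero_of_hasDerivAt_of_integrable hderiv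
    (((gInt n).const_mul ((n : ℝ) + 1)).sub ((gInt (n + 2)).const_mul 2)) (gInt (n + 1))
  rw [integral_sub ((gInt n).const_mul ((n : ℝ) + 1)) ((gInt (n + 2)).const_mul 2),
    integral_const_mul, integral_const_mul] at h0
  unfold gI
  linarith

lemma gI_odd (n : ℕ) : gI (2 * n + 1) = 0 := by
  have h : (∫ x : ℝ, x ^ (2 * n + 1) * Real.exp (-x ^ 2)) =
      ∫ x : ℝ, (-x) ^ (2 * n + 1) * Real.exp (-(-x) ^ 2) := (integral_neg_eq_self _ _).symm
  have h2 : (∫ x : ℝ, (-x) ^ (2 * n + 1) * Real.exp (-(-x) ^ 2)) =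
      - ∫ x : ℝ, x ^ (2 * n + 1) * Real.exp (-x ^ 2) := by
    rw [← integral_neg]
    congr 1 with x
    rw [Odd.neg_pow ⟨n, by ring⟩, neg_pow _ 2]
    ring_nf
  unfold gI
  linarith [h.trans h2]

lemma gI0 : gI 0 = Real.sqrt π := by
  have := integral_gaussian 1
  simpa [gI] using this

lemma gI2 : gI 2 = 1 / 2 * Real.sqrt π := by
  have := gI_rec 0; push_cast at this; rw [gI0] at this; linarith
lemma gI4 : gI 4 = 3 / 4 * Real.sqrt π := by
  have := gI_rec 2; push_cast at this; rw [gI2] at this; linarith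
lemma gI6 : gI 6 = 15 / 8 * Real.sqrt π := by
  have := gI_rec 4; push_cast at this; rw [gI4] at this; linarith
lemma gI8 : gI 8 = 105 / 16 * Real.sqrt π := by
  have := gI_rec 6; push_cast at this; rw [gI6] at this; linarith
lemma gI10 : gI 10 = 945 / 32 * Real.sqrt π := by
  have := gI_rec 8; push_cast at this; rw [gI8] at this; linarith
lemma gI12 : gI 12 = 10395 / 64 * Real.sqrt π := by
  have := gI_rec 10; push_cast at this; rw [gI10] at this; linarith
lemma gI14 : gI 14 = 135135 / 128 * Real.sqrt π := by
  have := gI_rec 12; push_cast at this; rw [gI12] at this; linarith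
lemma gI16 : gI 16 = 2027025 / 256 * Real.sqrt π := by
  have := gI_rec 14; push_cast at this; rw [gI14] at this; linarith

lemma gIo1 : gI 1 = 0 := by simpa using gI_odd 0
lemma gIo3 : gI 3 = 0 := by simpa using gI_odd 1
lemma gIo5 : gI 5 = 0 := by simpa using gI_odd 2
lemma gIo7 : gI 7 = 0 := by simpa using gI_odd 3
lemma gIo9 : gI 9 = 0 := by simpa using gI_odd 4
lemma gIo11 : gI 11 = 0 := by simpa using gI_odd 5
lemma gIo13 : gI 13 = 0 := by simpa using gI_odd 6
lemma gIo15 : gI 15 = 0 := by simpa using gI_odd 7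
lemma gIo17 : gI 17 = 0 := by simpa using gI_odd 8

lemma laguerre_key (k : ℕ) :
    (∫ x : ℝ, x ^ k * (Real.pi ^ (-(1 : ℝ) / 2) *
        (315 / 128 - 105 / 16 * x ^ 2 + 63 / 16 * x ^ 4 - 3 / 4 * x ^ 6 + 1 / 24 * x ^ 8) *
          Real.exp (-x ^ 2))) =
      Real.pi ^ (-(1 : ℝ) / 2) * (315 / 128 * gI k - 105 / 16 * gI (k + 2)
        + 63 / 16 * gI (k + 4) - 3 / 4 * gI (k + 6) + 1 / 24 * gI (k + 8)) := by
  have heq : ∀ x : ℝ, x ^ k * (Real.pi ^ (-(1 : ℝ) / 2) *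
        (315 / 128 - 105 / 16 * x ^ 2 + 63 / 16 * x ^ 4 - 3 / 4 * x ^ 6 + 1 / 24 * x ^ 8) *
          Real.exp (-x ^ 2)) =
      Real.pi ^ (-(1 : ℝ) / 2) * (315 / 128 * (x ^ k * Real.exp (-x ^ 2))
        - 105 / 16 * (x ^ (k + 2) * Real.exp (-x ^ 2))
        + 63 / 16 * (x ^ (k + 4) * Real.exp (-x ^ 2))
        - 3 / 4 * (x ^ (k + 6) * Real.exp (-x ^ 2))
        + 1 / 24 * (x ^ (k + 8) * Real.exp (-x ^ 2))) := by
    intro x; simp only [pow_add]; ring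
  simp only [heq]
  rw [integral_const_mul]
  congr 1
  have i1 := (gInt k).const_mul (315/128 : ℝ)
  have i2 := (gInt (k+2)).const_mul (105/16 : ℝ)
  have i3 := (gInt (k+4)).const_mul (63/16 : ℝ)
  have i4 := (gInt (k+6)).const_mul (3/4 : ℝ)
  have i5 := (gInt (k+8)).const_mul (1/24 : ℝ)
  have j2 : Integrable (fun x : ℝ => 315 / 128 * (x ^ k * Real.exp (-x ^ 2))
      - 105 / 16 * (x ^ (k + 2) * Real.exp (-x ^ 2))) := i1.sub i2
  have j3 : Integrable (fun x : ℝ => 315 / 128 * (x ^ k * Real.exp (-x ^ 2))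
      - 105 / 16 * (x ^ (k + 2) * Real.exp (-x ^ 2))
      + 63 / 16 * (x ^ (k + 4) * Real.exp (-x ^ 2))) := j2.add i3
  have j4 : Integrable (fun x : ℝ => 315 / 128 * (x ^ k * Real.exp (-x ^ 2))
      - 105 / 16 * (x ^ (k + 2) * Real.exp (-x ^ 2))
      + 63 / 16 * (x ^ (k + 4) * Real.exp (-x ^ 2))
      - 3 / 4 * (x ^ (k + 6) * Real.exp (-x ^ 2))) := j3.sub i4
  rw [integral_add j4 i5, integral_sub j3 i4, integral_add j2 i3, integral_sub i1 i2,
    integral_const_mul, integral_const_mul, integral_const_mul, integral_const_mul,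
    integral_const_mul]
  rfl

lemma pi_factor : Real.pi ^ (-(1 : ℝ) / 2) * Real.sqrt π = 1 := by
  rw [Real.sqrt_eq_rpow, ← Real.rpow_add Real.pi_pos]
  norm_num

/-- **Moment condition of order 10 for the Laguerre–Gaussian generating function**
`ψ(x) = π^{-1/2} (315/128 − (105/16)x² + (63/16)x⁴ − (3/4)x⁶ + (1/24)x⁸) e^{-x²}`:
its integral is `1` and its moments of orders `1, …, 9` vanish. -/
theorem laguerreGaussian_order_ten_moment_condition :
    (∫ x : ℝ, Real.pi ^ (-(1 : ℝ) / 2) *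
        (315 / 128 - 105 / 16 * x ^ 2 + 63 / 16 * x ^ 4 - 3 / 4 * x ^ 6 + 1 / 24 * x ^ 8) *
          Real.exp (-x ^ 2)) = 1 ∧
      ∀ k : ℕ, 1 ≤ k → k ≤ 9 →
        (∫ x : ℝ, x ^ k * (Real.pi ^ (-(1 : ℝ) / 2) *
            (315 / 128 - 105 / 16 * x ^ 2 + 63 / 16 * x ^ 4 - 3 / 4 * x ^ 6 + 1 / 24 * x ^ 8) *
              Real.exp (-x ^ 2))) = 0 := by
  constructor
  · have h := laguerre_key 0
    simp only [pow_zero, one_mul] at h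
    rw [h]
    norm_num [gI0, gI2, gI4, gI6, gI8]
    have : (315 / 128 * Real.sqrt π - 105 / 16 * (1 / 2 * Real.sqrt π)
        + 63 / 16 * (3 / 4 * Real.sqrt π) - 3 / 4 * (15 / 8 * Real.sqrt π)
        + 1 / 24 * (105 / 16 * Real.sqrt π)) = Real.sqrt π := by ring
    rw [this, Real.sqrt_eq_rpow, ← Real.rpow_add Real.pi_pos]
    norm_num
  · intro k hk1 hk9
    interval_cases k <;>
      rw [laguerre_key] <;>
      norm_num [gI2, gI4, gI6, gI8, gI10, gI12, gI14, gI16,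
        gIo1, gIo3, gIo5, gIo7, gIo9, gIo11, gIo13, gIo15, gIo17] <;>
      exact Or.inr (by ring)
end
end

section
/- The trigonometric Gaussian generating function ψ(x) := √(e/π) e^{-x²} cos(√2 x) satisfies the moment condition of order 4: ∫_ℝ ψ(x) dx = 1 and ∫_ℝ x^k ψ(x) dx = 0 for k = 1, 2, 3. -/
open MeasureTheory Real Complex

noncomputable section

lemma odd_int_zero (f : ℝ → ℝ) (hf : ∀ x, f (-x) = - f x) : ∫ x : ℝ, f x = 0 := by
  have h := integral_neg_eq_self f (volume : Measure ℝ)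
  simp_rw [hf, integral_neg] at h
  linarith

lemma int_pow_gauss (n : ℕ) (hn : n ≤ 2) :
    Integrable (fun x : ℝ => x ^ n * Real.exp (-x ^ 2)) := by
  have hg : Integrable (fun x : ℝ => 3 * Real.exp (-(1/2) * x ^ 2)) :=
    (integrable_exp_neg_mul_sq (by norm_num)).const_mul 3
  refine hg.mono' ?_ ?_
  · exact ((continuous_pow n).mul
      (Real.continuous_exp.comp (continuous_pow 2).neg)).aestronglyMeasurable
  · filter_upwards with x
    rw [norm_mul, norm_pow, Real.norm_eq_abs, Real.norm_eq_abs, Real.abs_exp]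
    have h1 : |x| ^ n ≤ 1 + x ^ 2 := by
      interval_cases n
      · simp; nlinarith [sq_nonneg x]
      · nlinarith [_root_.sq_abs x, sq_nonneg (|x| - 1), abs_nonneg x]
      · nlinarith [_root_.sq_abs x]
    have h2 : Real.exp (-x ^ 2) = Real.exp (-(1/2) * x ^ 2) * Real.exp (-(1/2) * x ^ 2) := by
      rw [← Real.exp_add]; ring_nf
    have h3 : (1 + x ^ 2) * Real.exp (-(1/2) * x ^ 2) ≤ 3 := by
      have he := Real.add_one_le_exp ((1/2) * x ^ 2)
      have hpos := Real.exp_pos ((1/2) * x ^ 2)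
      have hipos := Real.exp_pos (-(1/2) * x ^ 2)
      have hinv : Real.exp (-(1/2) * x ^ 2) * Real.exp ((1/2) * x ^ 2) = 1 := by
        rw [← Real.exp_add]; ring_nf; exact Real.exp_zero
      nlinarith [sq_nonneg x]
    calc |x| ^ n * Real.exp (-x ^ 2)
        ≤ (1 + x ^ 2) * Real.exp (-x ^ 2) :=
          mul_le_mul_of_nonneg_right h1 (Real.exp_pos _).le
      _ = ((1 + x ^ 2) * Real.exp (-(1/2) * x ^ 2)) * Real.exp (-(1/2) * x ^ 2) := by
          rw [h2]; ring
      _ ≤ 3 * Real.exp (-(1/2) * x ^ 2) :=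
          mul_le_mul_of_nonneg_right h3 (Real.exp_pos _).le

lemma gauss_cos_integral :
    ∫ x : ℝ, Real.exp (-x ^ 2) * Real.cos (Real.sqrt 2 * x)
      = Real.sqrt Real.pi * Real.exp (-(1/2) : ℝ) := by
  have h := fourierIntegral_gaussian (b := 1) (by norm_num) ((Real.sqrt 2 : ℝ) : ℂ)
  have hint : Integrable (fun x : ℝ => Complex.exp (Complex.I * (Real.sqrt 2 : ℝ) * x)
      * Complex.exp (-1 * (x : ℂ) ^ 2)) := by
    have := integrable_cexp_quadratic' (b := -1) (by norm_num)
      (Complex.I * (Real.sqrt 2 : ℝ)) 0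
    refine this.congr ?_
    filter_upwards with x
    rw [← Complex.exp_add]
    ring_nf
  have hpt : ∀ x : ℝ, Real.exp (-x ^ 2) * Real.cos (Real.sqrt 2 * x)
      = (Complex.exp (Complex.I * (Real.sqrt 2 : ℝ) * x)
          * Complex.exp (-1 * (x : ℂ) ^ 2)).re := by
    intro x
    have hx : Complex.exp (Complex.I * (Real.sqrt 2 : ℝ) * x) * Complex.exp (-1 * (x : ℂ) ^ 2)
        = Complex.exp (((-x ^ 2 : ℝ) : ℂ) + ((Real.sqrt 2 * x : ℝ) : ℂ) * Complex.I) := by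
      rw [← Complex.exp_add]; push_cast; ring_nf
    rw [hx, Complex.exp_re]
    simp [← Complex.ofReal_pow]
  have hL : ∫ x : ℝ, Real.exp (-x ^ 2) * Real.cos (Real.sqrt 2 * x)
      = (∫ x : ℝ, Complex.exp (Complex.I * (Real.sqrt 2 : ℝ) * x)
          * Complex.exp (-1 * (x : ℂ) ^ 2)).re := by
    simp_rw [hpt]
    exact integral_re hint
  have h2 : ((Real.sqrt 2 : ℝ) : ℂ) ^ 2 = (2 : ℂ) := by
    rw [← Complex.ofReal_pow, Real.sq_sqrt (by norm_num : (0:ℝ) ≤ 2)]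
    norm_num
  have hpi : ((Real.pi : ℂ)) ^ (1/2 : ℂ) = ((Real.sqrt Real.pi : ℝ) : ℂ) := by
    rw [Real.sqrt_eq_rpow, Complex.ofReal_cpow Real.pi_nonneg]
    norm_num
  have harg : (-(2:ℂ) / (4 * 1)) = ((-(1/2) : ℝ) : ℂ) := by norm_num
  rw [hL, h, div_one, h2, hpi, harg, ← Complex.ofReal_exp, ← Complex.ofReal_mul,
    Complex.ofReal_re]

lemma second_moment_zero :
    ∫ x : ℝ, x ^ 2 * Real.exp (-x ^ 2) * Real.cos (Real.sqrt 2 * x) = 0 := by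
  set c := Real.sqrt 2 with hc
  have hs2 : c * c = 2 := Real.mul_self_sqrt (by norm_num)
  set h : ℝ → ℝ := fun x => x * Real.exp (-x ^ 2) * Real.cos (c * x)
    - (c / 2) * (Real.exp (-x ^ 2) * Real.sin (c * x)) with hh
  have hderiv : ∀ x : ℝ, HasDerivAt h (-2 * (x ^ 2 * Real.exp (-x ^ 2) * Real.cos (c * x))) x := by
    intro x
    have hexp : HasDerivAt (fun x : ℝ => Real.exp (-x ^ 2))
        (Real.exp (-x ^ 2) * (-(2 * x ^ 1))) x := ((hasDerivAt_pow 2 x).neg).exp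
    have hmul : HasDerivAt (fun x : ℝ => c * x) c x := by
      simpa using (hasDerivAt_id x).const_mul c
    have hcos : HasDerivAt (fun x : ℝ => Real.cos (c * x)) (-Real.sin (c * x) * c) x := hmul.cos
    have hsin : HasDerivAt (fun x : ℝ => Real.sin (c * x)) (Real.cos (c * x) * c) x := hmul.sin
    have H := (((hasDerivAt_id x).mul hexp).mul hcos).sub ((hexp.mul hsin).const_mul (c / 2))
    refine H.congr_deriv (Eq.symm ?_)
    simp only [id_eq, pow_one, Pi.mul_apply]
    linear_combination (Real.exp (-x ^ 2) * Real.cos (c * x) / 2) * hs2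
  have hbdd_cos : ∃ C, ∀ x : ℝ, ‖Real.cos (c * x)‖ ≤ C :=
    ⟨1, fun x => by rw [Real.norm_eq_abs]; exact Real.abs_cos_le_one _⟩
  have hbdd_sin : ∃ C, ∀ x : ℝ, ‖Real.sin (c * x)‖ ≤ C :=
    ⟨1, fun x => by rw [Real.norm_eq_abs]; exact Real.abs_sin_le_one _⟩
  have hmcos : AEStronglyMeasurable (fun x : ℝ => Real.cos (c * x)) volume :=
    (Real.continuous_cos.comp (continuous_const.mul continuous_id)).aestronglyMeasurable
  have hmsin : AEStronglyMeasurable (fun x : ℝ => Real.sin (c * x)) volume :=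
    (Real.continuous_sin.comp (continuous_const.mul continuous_id)).aestronglyMeasurable
  have hint_h : Integrable h := by
    have h1 : Integrable (fun x : ℝ => Real.cos (c * x) * (x ^ 1 * Real.exp (-x ^ 2))) :=
      (int_pow_gauss 1 (by norm_num)).bdd_mul hmcos (ae_of_all _ hbdd_cos.choose_spec)
    have h2 : Integrable (fun x : ℝ => Real.sin (c * x) * (x ^ 0 * Real.exp (-x ^ 2))) :=
      (int_pow_gauss 0 (by norm_num)).bdd_mul hmsin (ae_of_all _ hbdd_sin.choose_spec)
    refine (h1.sub (h2.const_mul (c / 2))).congr ?_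
    filter_upwards with x
    simp only [hh, Pi.sub_apply, pow_one, pow_zero, one_mul]
    ring
  have hint_h' : Integrable
      (fun x : ℝ => -2 * (x ^ 2 * Real.exp (-x ^ 2) * Real.cos (c * x))) := by
    have h1 : Integrable (fun x : ℝ => Real.cos (c * x) * (x ^ 2 * Real.exp (-x ^ 2))) :=
      (int_pow_gauss 2 (by norm_num)).bdd_mul hmcos (ae_of_all _ hbdd_cos.choose_spec)
    refine (h1.const_mul (-2)).congr ?_
    filter_upwards with x
    ring
  have key := integral_eq_zero_of_hasDerivAt_of_integrable hderiv hint_h' hint_h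
  rw [integral_const_mul] at key
  linarith

/-- **Moment condition of order 4 for the trigonometric Gaussian generating function**
`ψ(x) = √(e/π) e^{-x²} cos(√2 x)`: its integral is `1` and its moments of
orders `1, 2, 3` vanish. -/
theorem trigonometricGaussian_order_four_moment_condition :
    (∫ x : ℝ, Real.sqrt (Real.exp 1 / Real.pi) * Real.exp (-x ^ 2) *
        Real.cos (Real.sqrt 2 * x)) = 1 ∧
      ∀ k : ℕ, 1 ≤ k → k ≤ 3 →
        (∫ x : ℝ, x ^ k * (Real.sqrt (Real.exp 1 / Real.pi) * Real.exp (-x ^ 2) *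
            Real.cos (Real.sqrt 2 * x))) = 0 := by
  have hπ : Real.sqrt Real.pi ≠ 0 := ne_of_gt (Real.sqrt_pos.mpr Real.pi_pos)
  have hC : Real.sqrt (Real.exp 1 / Real.pi) *
      (Real.sqrt Real.pi * Real.exp (-(1/2) : ℝ)) = 1 := by
    rw [Real.sqrt_div (Real.exp_pos 1).le, show (1:ℝ) = 2/2 by norm_num, ← Real.exp_half]
    have hone : Real.exp (1/2) * Real.exp (-(1/2)) = 1 := by
      rw [← Real.exp_add]; norm_num
    field_simp
    nlinarith [hone, Real.sqrt_nonneg Real.pi]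
  constructor
  · simp_rw [mul_assoc]
    rw [integral_const_mul, gauss_cos_integral, hC]
  · intro k hk1 hk3
    have hfact : ∀ x : ℝ, x ^ k * (Real.sqrt (Real.exp 1 / Real.pi) * Real.exp (-x ^ 2) *
        Real.cos (Real.sqrt 2 * x)) = Real.sqrt (Real.exp 1 / Real.pi) *
          (x ^ k * Real.exp (-x ^ 2) * Real.cos (Real.sqrt 2 * x)) := fun x => by ring
    simp_rw [hfact]
    rw [integral_const_mul]
    interval_cases k
    · rw [odd_int_zero, mul_zero]
      intro x
      simp only [pow_one, neg_sq, mul_neg, Real.cos_neg]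
      ring
    · rw [second_moment_zero, mul_zero]
    · rw [odd_int_zero, mul_zero]
      intro x
      simp only [neg_sq, mul_neg, Real.cos_neg]
      ring
end
end

section
/- The four-dimensional Laguerre–Gaussian generating function ψ : ℝ⁴ → ℝ, ψ(x) := π^{-2} (6 − 4‖x‖² + (1/2)‖x‖⁴) e^{-‖x‖²}, satisfies the moment condition of order 6: ∫_{ℝ⁴} ψ(y) dy = 1 and ∫_{ℝ⁴} y^α ψ(y) dy = 0 for every multi-index α ∈ ℕ⁴ with 1 ≤ |α| ≤ 5. -/
noncomputable section
open scoped BigOperators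
open MeasureTheory Real Set

namespace LGaux

/-- one-dimensional Gaussian moment integrand -/
def g (k : ℕ) (t : ℝ) : ℝ := t ^ k * Real.exp (-t ^ 2)

/-- one-dimensional Gaussian moments -/
def c (k : ℕ) : ℝ := ∫ t : ℝ, g k t

lemma integrable_g (k : ℕ) : Integrable (g k) := by
  have h := integrable_rpow_mul_exp_neg_mul_sq (b := 1) one_pos (s := (k : ℝ))
    (neg_one_lt_zero.trans_le (Nat.cast_nonneg _))
  exact (by simpa [Real.rpow_natCast, neg_one_mul] using h :
    Integrable (fun x : ℝ => x ^ k * Real.exp (-x ^ 2)))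

lemma c_odd {k : ℕ} (hk : Odd k) : c k = 0 := by
  obtain ⟨m, rfl⟩ := hk
  have h : (∫ t : ℝ, g (2 * m + 1) (-t)) = ∫ t : ℝ, g (2 * m + 1) t :=
    integral_neg_eq_self _ _
  have h2 : (∫ t : ℝ, g (2 * m + 1) (-t)) = - ∫ t : ℝ, g (2 * m + 1) t := by
    have hodd : Odd (2 * m + 1) := ⟨m, by ring⟩
    have : ∀ t : ℝ, g (2 * m + 1) (-t) = - g (2 * m + 1) t := by
      intro t
      simp [g, hodd.neg_pow, neg_sq]
    simp_rw [this]
    exact integral_neg _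
  have := h2.symm.trans h
  unfold c
  linarith

lemma c_even (n : ℕ) : c (2 * n) = Real.Gamma ((n : ℝ) + 1 / 2) := by
  have habs : ∀ x : ℝ, g (2 * n) x = g (2 * n) |x| := by
    intro x
    simp [g, pow_mul, sq_abs]
  unfold c
  rw [show (fun x : ℝ => g (2 * n) x) = fun x : ℝ => g (2 * n) |x| from funext habs,
    integral_comp_abs (f := g (2 * n))]
  have : (∫ x in Ioi (0:ℝ), g (2 * n) x)
      = ∫ x in Ioi (0:ℝ), x ^ ((2 * n : ℕ) : ℝ) * Real.exp (- x ^ (2:ℝ)) := by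
    refine setIntegral_congr_fun measurableSet_Ioi (fun x hx => ?_)
    rw [Real.rpow_natCast, Real.rpow_two]
    rfl
  rw [this, integral_rpow_mul_exp_neg_rpow two_pos (neg_one_lt_zero.trans_le (Nat.cast_nonneg _))]
  rw [show ((2 * n : ℕ) : ℝ) = 2 * n by push_cast; ring]
  rw [show ((2 * (n:ℝ) + 1) / 2) = (n : ℝ) + 1 / 2 by ring]
  ring


lemma c_val (n : ℕ) (v : ℝ) (h : Real.Gamma ((n : ℝ) + 1 / 2) = v) : c (2 * n) = v := by
  rw [c_even]; exact h

lemma hc0 : c 0 = Real.sqrt π := c_val 0 _ (by norm_num [Real.Gamma_one_half_eq])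

lemma Gamma_succ_half (n : ℕ) (v : ℝ) (h : Real.Gamma ((n : ℝ) + 1 / 2) = v) :
    Real.Gamma (((n : ℝ) + 1) + 1 / 2) = ((n : ℝ) + 1 / 2) * v := by
  rw [show ((n : ℝ) + 1) + 1 / 2 = ((n : ℝ) + 1 / 2) + 1 by ring,
    Real.Gamma_add_one (by positivity), h]

lemma hG0 : Real.Gamma ((0 : ℕ) + 1 / 2 : ℝ) = Real.sqrt π := by
  norm_num [Real.Gamma_one_half_eq]

lemma hG1 : Real.Gamma ((1 : ℕ) + 1 / 2 : ℝ) = 1 / 2 * Real.sqrt π := by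
  have := Gamma_succ_half 0 _ hG0
  norm_num at this ⊢
  linarith

lemma hG2 : Real.Gamma ((2 : ℕ) + 1 / 2 : ℝ) = 3 / 4 * Real.sqrt π := by
  have := Gamma_succ_half 1 _ hG1
  norm_num at this ⊢
  linarith

lemma hG3 : Real.Gamma ((3 : ℕ) + 1 / 2 : ℝ) = 15 / 8 * Real.sqrt π := by
  have := Gamma_succ_half 2 _ hG2
  norm_num at this ⊢
  linarith

lemma hG4 : Real.Gamma ((4 : ℕ) + 1 / 2 : ℝ) = 105 / 16 * Real.sqrt π := by
  have := Gamma_succ_half 3 _ hG3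
  norm_num at this ⊢
  linarith

lemma hc2 : c 2 = 1 / 2 * Real.sqrt π := c_val 1 _ (by exact_mod_cast hG1)
lemma hc4 : c 4 = 3 / 4 * Real.sqrt π := c_val 2 _ (by exact_mod_cast hG2)
lemma hc6 : c 6 = 15 / 8 * Real.sqrt π := c_val 3 _ (by exact_mod_cast hG3)
lemma hc8 : c 8 = 105 / 16 * Real.sqrt π := c_val 4 _ (by exact_mod_cast hG4)


/-- shift a multi-index by 2 in coordinate `j` -/
def sh (α : Fin 4 → ℕ) (j : Fin 4) : Fin 4 → ℕ := fun i => α i + 2 * (if i = j then 1 else 0)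

lemma key (β : Fin 4 → ℕ) :
    (∫ x : Fin 4 → ℝ, ∏ i, g (β i) (x i)) = ∏ i, c (β i) :=
  integral_fintype_prod_eq_prod (fun i => g (β i))

lemma int_prod (β : Fin 4 → ℕ) :
    Integrable (fun x : Fin 4 → ℝ => ∏ i, g (β i) (x i)) :=
  Integrable.fintype_prod (fun i => integrable_g (β i))

lemma prod_g_eq (β : Fin 4 → ℕ) (x : Fin 4 → ℝ) :
    (∏ i, g (β i) (x i)) = (∏ i, (x i) ^ (β i)) * Real.exp (-∑ i, (x i) ^ 2) := by
  simp only [g]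
  rw [Finset.prod_mul_distrib, ← Real.exp_sum]
  congr 2
  rw [← Finset.sum_neg_distrib]

lemma pow_shift (α : Fin 4 → ℕ) (j : Fin 4) (x : Fin 4 → ℝ) :
    (∏ i, (x i) ^ (sh α j i)) = (∏ i, (x i) ^ (α i)) * (x j) ^ 2 := by
  have h : ∀ i, (x i) ^ (sh α j i)
      = (x i) ^ (α i) * (if i = j then (x i) ^ 2 else 1) := by
    intro i
    by_cases hij : i = j <;> simp [sh, hij, pow_add]
  simp_rw [h]
  rw [Finset.prod_mul_distrib, Finset.prod_ite_eq']
  simp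

lemma master (α : Fin 4 → ℕ) :
    (∫ y : EuclideanSpace ℝ (Fin 4),
        (∏ i, (y i) ^ (α i)) *
          ((π ^ 2)⁻¹ * (6 - 4 * ‖y‖ ^ 2 + 1 / 2 * ‖y‖ ^ 4) * Real.exp (-‖y‖ ^ 2)))
    = (π ^ 2)⁻¹ * (6 * ∏ i, c (α i)
        - 4 * ∑ j, ∏ i, c (sh α j i)
        + 1 / 2 * ∑ j, ∑ k, ∏ i, c (sh (sh α j) k i)) := by
  have hmp := (EuclideanSpace.volume_preserving_symm_measurableEquiv_toLp (Fin 4)).symm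
  rw [← hmp.integral_comp (MeasurableEquiv.measurableEmbedding _)]
  have hnorm : ∀ x : Fin 4 → ℝ,
      ‖(MeasurableEquiv.toLp 2 (Fin 4 → ℝ)).symm.symm x‖ ^ 2 = ∑ i, (x i) ^ 2 := by
    intro x
    rw [EuclideanSpace.norm_eq, Real.sq_sqrt (by positivity)]
    refine Finset.sum_congr rfl fun i _ => ?_
    simp [Real.norm_eq_abs, sq_abs]
  have hfn : (fun x : Fin 4 → ℝ =>
        (∏ i, ((MeasurableEquiv.toLp 2 (Fin 4 → ℝ)).symm.symm x i) ^ (α i)) *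
          ((π ^ 2)⁻¹ * (6 - 4 * ‖(MeasurableEquiv.toLp 2 (Fin 4 → ℝ)).symm.symm x‖ ^ 2
              + 1 / 2 * ‖(MeasurableEquiv.toLp 2 (Fin 4 → ℝ)).symm.symm x‖ ^ 4)
            * Real.exp (-‖(MeasurableEquiv.toLp 2 (Fin 4 → ℝ)).symm.symm x‖ ^ 2)))
      = fun x : Fin 4 → ℝ => (π ^ 2)⁻¹ *
          (6 * (∏ i, g (α i) (x i))
            - 4 * (∑ j, ∏ i, g (sh α j i) (x i))
            + 1 / 2 * (∑ j, ∑ k, ∏ i, g (sh (sh α j) k i) (x i))) := by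
    funext x
    have h2 := hnorm x
    have h4 : ‖(MeasurableEquiv.toLp 2 (Fin 4 → ℝ)).symm.symm x‖ ^ 4
        = (∑ i, (x i) ^ 2) ^ 2 := by
      rw [← h2]; ring
    have happ : ∀ i : Fin 4, ((MeasurableEquiv.toLp 2 (Fin 4 → ℝ)).symm.symm x) i = x i :=
      fun i => rfl
    rw [h2, h4]
    simp only [happ, prod_g_eq, pow_shift, Fin.sum_univ_four]
    ring
  rw [hfn]
  have iA : Integrable (fun x : Fin 4 → ℝ => ∏ i, g (α i) (x i)) := int_prod _
  have iB : Integrable (fun x : Fin 4 → ℝ => ∑ j, ∏ i, g (sh α j i) (x i)) :=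
    integrable_finset_sum _ (fun j _ => int_prod _)
  have iC : Integrable (fun x : Fin 4 → ℝ =>
      ∑ j, ∑ k, ∏ i, g (sh (sh α j) k i) (x i)) :=
    integrable_finset_sum _ (fun j _ => integrable_finset_sum _ (fun k _ => int_prod _))
  have h1 : Integrable (fun x : Fin 4 → ℝ =>
      6 * (∏ i, g (α i) (x i)) - 4 * (∑ j, ∏ i, g (sh α j i) (x i))) :=
    (iA.const_mul 6).sub (iB.const_mul 4)
  have h2 : Integrable (fun x : Fin 4 → ℝ =>
      1 / 2 * (∑ j, ∑ k, ∏ i, g (sh (sh α j) k i) (x i))) := iC.const_mul (1/2)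
  rw [integral_const_mul]
  congr 1
  rw [integral_add h1 h2, integral_sub (iA.const_mul 6) (iB.const_mul 4),
    integral_const_mul, integral_const_mul, integral_const_mul,
    integral_finset_sum _ (fun j _ => int_prod _),
    integral_finset_sum _ (fun (j : Fin 4) _ =>
      integrable_finset_sum _ (fun (k : Fin 4) _ => int_prod _))]
  simp_rw [integral_finset_sum _ (fun (k : Fin 4) _ => int_prod _), key]

lemma sqrtpi_sq : Real.sqrt π * Real.sqrt π = π := Real.mul_self_sqrt pi_pos.le

end LGaux

open LGaux in
set_option maxHeartbeats 2000000 in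
/-- **Moment condition of order 6 for the four-dimensional Laguerre–Gaussian generating
function** `ψ(x) = π^{-2} (6 − 4‖x‖² + (1/2)‖x‖⁴) e^{-‖x‖²}` on `ℝ⁴`: its integral is `1`
and all moments `∫ y^α ψ(y) dy` with multi-index `1 ≤ |α| ≤ 5` vanish. -/
theorem laguerreGaussian_dim_four_order_six_moment_condition :
    (∫ y : EuclideanSpace ℝ (Fin 4),
        (Real.pi ^ 2)⁻¹ * (6 - 4 * ‖y‖ ^ 2 + 1 / 2 * ‖y‖ ^ 4) * Real.exp (-‖y‖ ^ 2)) = 1 ∧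
      ∀ α : Fin 4 → ℕ, 1 ≤ ∑ i, α i → (∑ i, α i) ≤ 5 →
        (∫ y : EuclideanSpace ℝ (Fin 4),
            (∏ i, (y i) ^ (α i)) *
              ((Real.pi ^ 2)⁻¹ * (6 - 4 * ‖y‖ ^ 2 + 1 / 2 * ‖y‖ ^ 4) *
                Real.exp (-‖y‖ ^ 2))) = 0 := by
  constructor
  · have hm := master (fun _ => 0)
    simp only [pow_zero, Finset.prod_const_one, one_mul] at hm
    rw [hm]
    simp only [sh, Fin.sum_univ_four, Fin.prod_univ_four]
    norm_num (config := { decide := true }) [hc0, hc2, hc4, hc6, hc8]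
    have hs := sqrtpi_sq
    have hpi : (Real.pi : ℝ) ^ 2 ≠ 0 := pow_ne_zero 2 Real.pi_ne_zero
    field_simp
    nlinarith [hs, Real.sqrt_nonneg Real.pi, Real.pi_pos]
  · intro α h1 h5
    rw [master α]
    rcases Classical.em (∃ i, Odd (α i)) with ⟨i, hi⟩ | hall
    · have hprod : ∀ β : Fin 4 → ℕ, Odd (β i) → (∏ i', c (β i')) = 0 := fun β hβ =>
        Finset.prod_eq_zero (Finset.mem_univ i) (c_odd hβ)
      rw [hprod _ hi,
        Finset.sum_eq_zero (fun j _ => hprod _ (hi.add_even (even_two_mul _))),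
        Finset.sum_eq_zero (fun j _ => Finset.sum_eq_zero (fun k _ =>
          hprod _ ((hi.add_even (even_two_mul _)).add_even (even_two_mul _))))]
      ring
    · push_neg at hall
      simp only [Nat.not_odd_iff_even] at hall
      obtain ⟨b0, hb0⟩ := hall 0
      obtain ⟨b1, hb1⟩ := hall 1
      obtain ⟨b2, hb2⟩ := hall 2
      obtain ⟨b3, hb3⟩ := hall 3
      rw [Fin.sum_univ_four, hb0, hb1, hb2, hb3] at h1 h5
      simp only [sh, Fin.sum_univ_four, Fin.prod_univ_four]
      norm_num (config := { decide := true })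
      rw [hb0, hb1, hb2, hb3]
      have e0 : b0 ≤ 2 := by omega
      have e1 : b1 ≤ 2 := by omega
      have e2 : b2 ≤ 2 := by omega
      have e3 : b3 ≤ 2 := by omega
      interval_cases b0 <;> interval_cases b1 <;> interval_cases b2 <;>
        interval_cases b3 <;>
        first
          | omega
          | (norm_num [hc0, hc2, hc4, hc6, hc8]; try ring; try tauto)
end
end
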